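/- arXiv:1012.2089 — 8 statements merged into one kernel-verified Lean document; each statement's English description precedes it below -/
import Mathlib

section
/- Let H be a finite group, D ⊆ H with |des(H,D)| = |H|, and G ≤ Aut(des(H,D)) containing all right translations. If the point stabilizer G_p fixes a block B and also fixes the block Bh for some h ∈ H, then G_p fixes the point p·h⁻¹. -/
/-!
Both the points and the blocks form a single `G`-orbit of size `|H|` (the right translations
are transitive on each), so `G_p` and `G_{Bh}` have the same index in `G`; since `G_p ≤ G_{Bh}`,
they are equal. For `g ∈ G_p`, conjugating by the right translation `r = (· * h)` gives
`r g r⁻¹ ∈ G_{r • B} = G_{Bh} = G_p`, i.e. `g` fixes `r⁻¹ • p = p * h⁻¹`.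
-/

open Pointwise MulAction

theorem MulAction.stabilizer_eq_of_le_of_ncard_orbit_eq {G α β : Type*} [Group G]
    [MulAction G α] [MulAction G β] {a : α} {b : β} (hfin : (orbit G a).Finite)
    (hcard : (orbit G a).ncard = (orbit G b).ncard) (hle : stabilizer G a ≤ stabilizer G b) :
    stabilizer G a = stabilizer G b := by
  have hindex : (stabilizer G a).index = (stabilizer G b).index := by
    rw [index_stabilizer, index_stabilizer, hcard]
  have hne : (stabilizer G b).index ≠ 0 := by
    rw [← hindex, index_stabilizer]
    exact ((Set.ncard_pos hfin).2 (nonempty_orbit a)).ne'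
  refine le_antisymm hle (Subgroup.relIndex_eq_one.1 ?_)
  have := Subgroup.relIndex_mul_index hle
  rwa [hindex, mul_eq_right₀ hne] at this

section CayleyDesign

variable {H : Type*} [Group H]

/-- The blocks `D h` of the Cayley design `des(H, D)`. -/
def cayleyBlocks (D : Set H) : Set (Set H) :=
  {B | ∃ h : H, B = (fun x => x * h) '' D}

theorem image_mulRight_image_mulRight (a b : H) (s : Set H) :
    (fun x => x * a) '' ((fun x => x * b) '' s) = (fun x => x * (b * a)) '' s := by
  simp only [Set.image_image, mul_assoc]

theorem image_mulRight_mem_cayleyBlocks {D B : Set H} (hB : B ∈ cayleyBlocks D) (h : H) :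
    (fun x => x * h) '' B ∈ cayleyBlocks D := by
  obtain ⟨k, rfl⟩ := hB
  exact ⟨k * h, image_mulRight_image_mulRight h k D⟩

variable {G : Subgroup (Equiv.Perm H)}

theorem orbit_eq_univ_of_mulRight_mem (htrans : ∀ h : H, Equiv.mulRight h ∈ G) (p : H) :
    orbit G p = Set.univ :=
  Set.eq_univ_of_forall fun q =>
    ⟨⟨Equiv.mulRight (p⁻¹ * q), htrans _⟩, by simp [Subgroup.smul_def]⟩

theorem orbit_eq_cayleyBlocks {D B : Set H} (htrans : ∀ h : H, Equiv.mulRight h ∈ G)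
    (hGaut : ∀ g ∈ G, ∀ B ∈ cayleyBlocks D, (g : H → H) '' B ∈ cayleyBlocks D)
    (hB : B ∈ cayleyBlocks D) :
    orbit G B = cayleyBlocks D := by
  ext S
  constructor
  · rintro ⟨k, rfl⟩
    exact hGaut k k.2 B hB
  · rintro ⟨k, rfl⟩
    obtain ⟨b, rfl⟩ := hB
    refine ⟨⟨Equiv.mulRight (b⁻¹ * k), htrans _⟩, ?_⟩
    change (fun x => x * (b⁻¹ * k)) '' _ = _
    rw [image_mulRight_image_mulRight, mul_inv_cancel_left]

end CayleyDesign

/-- In a Cayley design `des(H,D)` with as many blocks as points,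
if the point stabilizer `G_p` fixes the block `B` and also the block `B·h`,
then it fixes the point `p·h⁻¹`. -/
theorem stmt_1 {H : Type*} [Group H] [Fintype H]
    (D : Set H) (blocks : Set (Set H))
    (hblocks : blocks = {B | ∃ h : H, B = (fun x => x * h) '' D})
    (hcard : Nat.card blocks = Nat.card H)
    (G : Subgroup (Equiv.Perm H))
    (hGaut : ∀ g ∈ G, ∀ B ∈ blocks, (g : H → H) '' B ∈ blocks)
    (htrans : ∀ h : H, Equiv.mulRight h ∈ G)
    (p : H) (h : H) (B : Set H) (hB : B ∈ blocks)
    (hfixB : ∀ g ∈ G, g p = p → (g : H → H) '' B = B)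
    (hfixBh : ∀ g ∈ G, g p = p →
      (g : H → H) '' ((fun x => x * h) '' B) = (fun x => x * h) '' B) :
    ∀ g ∈ G, g p = p → g (p * h⁻¹) = p * h⁻¹ := by
  obtain rfl : blocks = cayleyBlocks D := hblocks
  have hstab : stabilizer G p = stabilizer G ((fun x => x * h) '' B) := by
    refine stabilizer_eq_of_le_of_ncard_orbit_eq (Set.toFinite _) ?_ fun g hg => hfixBh g g.2 hg
    rw [orbit_eq_univ_of_mulRight_mem htrans,
      orbit_eq_cayleyBlocks htrans hGaut (image_mulRight_mem_cayleyBlocks hB h),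
      Set.ncard_univ, ← Nat.card_coe_set_eq, hcard]
  intro g hg hgp
  let r : G := ⟨Equiv.mulRight h, htrans h⟩
  have hgB : (⟨g, hg⟩ : G) • B = B := hfixB g hg hgp
  have hconj : r * ⟨g, hg⟩ * r⁻¹ ∈ stabilizer G (r • B) := by
    rw [mem_stabilizer_iff, mul_smul, mul_smul, inv_smul_smul, hgB]
  have hfix : (r * ⟨g, hg⟩ * r⁻¹) • p = p := hstab.ge hconj
  rw [mul_smul, mul_smul, ← eq_inv_smul_iff] at hfix
  have hr : r⁻¹ • p = p * h⁻¹ := by simp [r, Subgroup.smul_def]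
  rwa [hr, Subgroup.mk_smul, Equiv.Perm.smul_def] at hfix
end

section
/- A subset D of a finite group H is a skew Hadamard difference set (i.e., H∖{1} is the disjoint union of D and D⁻¹, and D·D⁻¹ as a multiset hits 1 exactly |D| - λ times and every other element exactly λ times, with appropriate parameters) if and only if the partition {{1}, D, D⁻¹} of H is a Schur partition of H. -/
open scoped Pointwise

/-- The ℤ-submodule of the group ring ℤ[H] spanned by 1, \underline{D} and
\underline{D⁻¹}. -/
noncomputable def schurSpan {H : Type*} [Group H] [DecidableEq H] (D : Finset H) :
    Submodule ℤ (MonoidAlgebra ℤ H) :=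
  Submodule.span ℤ
    ({MonoidAlgebra.of ℤ H 1, ∑ d ∈ D, MonoidAlgebra.of ℤ H d,
      ∑ d ∈ D⁻¹, MonoidAlgebra.of ℤ H d} : Set (MonoidAlgebra ℤ H))

/-!
Write `A`, `B`, `G` for the sums of the elements of `D`, `D⁻¹`, `H` in `ℤ[H]`. The partition
condition says `1 + A + B = G`, and `G` absorbs: `A * G = G * A = |D| • G`. Expanding
`A * (1 + A + B)` and `(1 + A + B) * B` shows that `A * A`, `B * B`, `B * A` lie in
`span {1, A, B}` as soon as `A * B` does, so the span is a ring iff `A * B ∈ span {1, A, B}`.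

The coefficient of `A * B` at `g` is the number of representations `g = d * d'⁻¹` with
`d, d' ∈ D`. If the span is a ring, `A * B = a + b A + c B`, so this number is constant on `D`
and on `D⁻¹`; as it is also invariant under `g ↦ g⁻¹`, it is a constant `λ` on `H ∖ {1}`.
Counting all pairs gives `|D|² = |D| + 2|D|λ`, so `|D| = 2λ + 1` and `|H| = 4λ + 3`.
Conversely, a constant count `λ` means `A * B = (|D| - λ) + λ G`, which lies in the span.
-/

theorem Submodule.mul_mem_span_of_forall_mul_mem {R A : Type*} [CommSemiring R] [Semiring A]
    [Algebra R A] {s : Set A} (hs : ∀ a ∈ s, ∀ b ∈ s, a * b ∈ span R s) {x y : A}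
    (hx : x ∈ span R s) (hy : y ∈ span R s) : x * y ∈ span R s := by
  have hle : span R (s * s) ≤ span R s :=
    span_le.mpr fun _ ⟨a, ha, b, hb, hab⟩ => hab ▸ hs a ha b hb
  exact hle (span_mul_span R s s ▸ mul_mem_mul hx hy)

namespace SchurPartition

open MonoidAlgebra Finset

variable {R H : Type*} [Group H]

/-- The element `\underline{S}` of `R[H]` (a *simple quantity* in Schur-ring terminology). -/
noncomputable def simpleQuantity (R : Type*) [Semiring R] (S : Finset H) : MonoidAlgebra R H :=
  ∑ s ∈ S, of R H s

section Semiring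

variable [Semiring R]

theorem simpleQuantity_mul_univ [Fintype H] (S : Finset H) :
    simpleQuantity R S * simpleQuantity R univ = #S • simpleQuantity R (univ : Finset H) := by
  have hmul (s : H) : of R H s * simpleQuantity R univ = simpleQuantity R (univ : Finset H) := by
    simp only [simpleQuantity, mul_sum, ← map_mul]
    exact Fintype.sum_equiv (Equiv.mulLeft s) _ _ fun _ => rfl
  simp only [simpleQuantity] at hmul ⊢
  rw [sum_mul, sum_congr rfl fun s _ => hmul s, sum_const]

theorem univ_mul_simpleQuantity [Fintype H] (S : Finset H) :
    simpleQuantity R univ * simpleQuantity R S = #S • simpleQuantity R (univ : Finset H) := by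
  have hmul (s : H) : simpleQuantity R univ * of R H s = simpleQuantity R (univ : Finset H) := by
    simp only [simpleQuantity, sum_mul, ← map_mul]
    exact Fintype.sum_equiv (Equiv.mulRight s) _ _ fun _ => rfl
  simp only [simpleQuantity] at hmul ⊢
  rw [mul_sum, sum_congr rfl fun s _ => hmul s, sum_const]

variable [DecidableEq H]

def differenceCount (D : Finset H) (g : H) : ℕ :=
  #{p ∈ D ×ˢ D | p.1 * p.2⁻¹ = g}

theorem coeff_one_apply (g : H) : (1 : MonoidAlgebra R H).coeff g = if g = 1 then 1 else 0 := by
  simp only [one_def, coeff_single, Finsupp.single_apply, eq_comm]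

theorem coeff_sum_of {ι : Type*} (s : Finset ι) (f : ι → H) (g : H) :
    (∑ i ∈ s, of R H (f i)).coeff g = #{i ∈ s | f i = g} := by
  simp [coeff_sum, Finsupp.single_apply]

theorem coeff_simpleQuantity (S : Finset H) (g : H) :
    (simpleQuantity R S).coeff g = if g ∈ S then 1 else 0 :=
  (coeff_sum_of S id g).trans (by simp [filter_eq', apply_ite card])

theorem simpleQuantity_mul_simpleQuantity_inv (D : Finset H) :
    simpleQuantity R D * simpleQuantity R D⁻¹ = ∑ p ∈ D ×ˢ D, of R H (p.1 * p.2⁻¹) := by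
  rw [simpleQuantity, simpleQuantity, sum_mul_sum, sum_product, inv_def]
  simp only [sum_image fun a _ b _ h => inv_injective h, map_mul]

theorem coeff_simpleQuantity_mul_inv (D : Finset H) (g : H) :
    (simpleQuantity R D * simpleQuantity R D⁻¹).coeff g = differenceCount D g := by
  rw [simpleQuantity_mul_simpleQuantity_inv, coeff_sum_of, differenceCount]

end Semiring

variable [DecidableEq H]

theorem differenceCount_one (D : Finset H) : differenceCount D 1 = #D := by
  rw [differenceCount, ← diag_card D]
  congr 1
  ext ⟨a, b⟩
  simp only [mem_filter, mem_product, mem_diag, mul_inv_eq_one]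
  constructor
  · rintro ⟨⟨ha, -⟩, rfl⟩
    exact ⟨ha, rfl⟩
  · rintro ⟨ha, rfl⟩
    exact ⟨⟨ha, ha⟩, rfl⟩

theorem differenceCount_inv (D : Finset H) (g : H) :
    differenceCount D g⁻¹ = differenceCount D g := by
  refine card_bij' (fun p _ => p.swap) (fun p _ => p.swap) ?_ ?_ (fun _ _ => rfl) (fun _ _ => rfl)
    <;> simp only [mem_filter, mem_product, Prod.fst_swap, Prod.snd_swap]
  · rintro ⟨a, b⟩ ⟨⟨ha, hb⟩, hab⟩
    exact ⟨⟨hb, ha⟩, by rw [← inv_inv g, ← hab, mul_inv_rev, inv_inv]⟩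
  · rintro ⟨a, b⟩ ⟨⟨ha, hb⟩, rfl⟩
    exact ⟨⟨hb, ha⟩, by rw [mul_inv_rev, inv_inv]⟩

theorem sum_differenceCount [Fintype H] (D : Finset H) :
    ∑ g, differenceCount D g = #D * #D := by
  rw [← card_product]
  exact (card_eq_sum_card_fiberwise fun _ _ => mem_univ _).symm

theorem simpleQuantity_mul_inv_of_differenceCount [Fintype H] [Ring R] {D : Finset H} {lam : ℕ}
    (hD : ∀ g ≠ 1, differenceCount D g = lam) :
    simpleQuantity R D * simpleQuantity R D⁻¹ =
      ((#D : R) - lam) • 1 + (lam : R) • simpleQuantity R (univ : Finset H) := by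
  ext g
  rw [coeff_simpleQuantity_mul_inv, coeff_add, coeff_smul, coeff_smul, Finsupp.add_apply,
    Finsupp.smul_apply, Finsupp.smul_apply, coeff_one_apply, coeff_simpleQuantity]
  by_cases hg : g = 1
  · simp [hg, differenceCount_one]
  · simp [hg, hD g hg]

section Partition

variable {D : Finset H}

theorem notMem_inv_of_mem (hdisj : D ∩ D⁻¹ = ∅) {g : H} (hg : g ∈ D) : g ∉ D⁻¹ := fun hg' => by
  simpa [hdisj] using mem_inter.mpr ⟨hg, hg'⟩

theorem schurSpan_eq :
    schurSpan D = Submodule.span ℤ {1, simpleQuantity ℤ D, simpleQuantity ℤ D⁻¹} := by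
  rw [schurSpan, map_one]
  rfl

theorem one_mem_schurSpan : 1 ∈ schurSpan D := by
  rw [schurSpan_eq]
  exact Submodule.subset_span (by simp)

theorem simpleQuantity_mem_schurSpan : simpleQuantity ℤ D ∈ schurSpan D := by
  rw [schurSpan_eq]
  exact Submodule.subset_span (by simp)

theorem simpleQuantity_inv_mem_schurSpan : simpleQuantity ℤ D⁻¹ ∈ schurSpan D := by
  rw [schurSpan_eq]
  exact Submodule.subset_span (by simp)

variable [Fintype H]

theorem one_notMem (hcover : D ∪ D⁻¹ = univ \ {1}) : 1 ∉ D := fun h1 => by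
  simpa [hcover] using mem_union_left D⁻¹ h1

theorem inv_mem_of_notMem (hcover : D ∪ D⁻¹ = univ \ {1}) {g : H} (hg : g ≠ 1) (hgD : g ∉ D) :
    g⁻¹ ∈ D := by
  have : g ∈ D ∪ D⁻¹ := by simp [hcover, hg]
  simpa [hgD] using this

theorem one_add_simpleQuantity_add_inv [Semiring R] (hdisj : D ∩ D⁻¹ = ∅)
    (hcover : D ∪ D⁻¹ = univ \ {1}) :
    1 + simpleQuantity R D + simpleQuantity R D⁻¹ = simpleQuantity R (univ : Finset H) := by
  ext g
  simp only [coeff_add, Finsupp.add_apply, coeff_one_apply, coeff_simpleQuantity, mem_univ, if_true]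
  by_cases hg : g = 1
  · simp [hg, one_notMem hcover]
  by_cases hgD : g ∈ D
  · simp [hg, hgD, notMem_inv_of_mem hdisj hgD]
  · simp [hg, hgD, inv_mem_of_notMem hcover hg hgD]

theorem card_eq_two_mul_card_add_one (hdisj : D ∩ D⁻¹ = ∅) (hcover : D ∪ D⁻¹ = univ \ {1}) :
    Fintype.card H = 2 * #D + 1 := by
  have h := congrArg card hcover
  rw [card_union_of_disjoint (disjoint_iff_inter_eq_empty.mpr hdisj), card_inv,
    card_sdiff_of_subset (subset_univ _), card_singleton, card_univ] at h
  have := Fintype.card_pos (α := H)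
  omega

theorem differenceCount_eq_of_forall_ne_one (hdisj : D ∩ D⁻¹ = ∅)
    (hcover : D ∪ D⁻¹ = univ \ {1}) {lam : ℕ} (hD : ∀ g ≠ 1, differenceCount D g = lam) {h : H}
    (hh : h ≠ 1) : lam = (Fintype.card H - 3) / 4 := by
  have hcard := card_eq_two_mul_card_add_one hdisj hcover
  have hsum := sum_differenceCount D
  rw [← add_sum_erase _ _ (mem_univ 1), differenceCount_one,
    sum_congr rfl fun g hg => hD g (ne_of_mem_erase hg), sum_const, card_erase_of_mem (mem_univ 1),
    card_univ, hcard, smul_eq_mul, Nat.add_sub_cancel] at hsum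
  have hpos : 0 < #D := by
    by_cases hhD : h ∈ D
    · exact card_pos.mpr ⟨h, hhD⟩
    · exact card_pos.mpr ⟨_, inv_mem_of_notMem hcover hh hhD⟩
  have hk : #D = 2 * lam + 1 := Nat.eq_of_mul_eq_mul_left hpos (by linarith)
  omega

theorem simpleQuantity_univ_mem_schurSpan (hdisj : D ∩ D⁻¹ = ∅)
    (hcover : D ∪ D⁻¹ = univ \ {1}) : simpleQuantity ℤ (univ : Finset H) ∈ schurSpan D := by
  rw [← one_add_simpleQuantity_add_inv hdisj hcover]
  exact add_mem (add_mem one_mem_schurSpan simpleQuantity_mem_schurSpan)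
    simpleQuantity_inv_mem_schurSpan

theorem mul_mem_schurSpan (hdisj : D ∩ D⁻¹ = ∅) (hcover : D ∪ D⁻¹ = univ \ {1})
    (hAB : simpleQuantity ℤ D * simpleQuantity ℤ D⁻¹ ∈ schurSpan D) {x y : MonoidAlgebra ℤ H}
    (hx : x ∈ schurSpan D) (hy : y ∈ schurSpan D) : x * y ∈ schurSpan D := by
  rw [schurSpan_eq] at hx hy ⊢
  refine Submodule.mul_mem_span_of_forall_mul_mem ?_ hx hy
  rw [← schurSpan_eq]
  simp only [Set.mem_insert_iff, Set.mem_singleton_iff]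
  have hG := simpleQuantity_univ_mem_schurSpan hdisj hcover
  have hpart := one_add_simpleQuantity_add_inv (R := ℤ) hdisj hcover
  have hAG := simpleQuantity_mul_univ (R := ℤ) D
  have hGA := univ_mul_simpleQuantity (R := ℤ) D
  have hGB := univ_mul_simpleQuantity (R := ℤ) D⁻¹
  set A := simpleQuantity ℤ D
  set B := simpleQuantity ℤ D⁻¹
  set G := simpleQuantity ℤ (univ : Finset H)
  have hAA : A * A = #D • G - A - A * B := by
    rw [← hAG, ← hpart]
    noncomm_ring
  have hBA : B * A = A * B := by
    have hcomm : A * (1 + A + B) = (1 + A + B) * A := by rw [hpart, hAG, hGA]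
    calc B * A = (1 + A + B) * A - A - A * A := by noncomm_ring
      _ = A * B := by rw [← hcomm]; noncomm_ring
  have hBB : B * B = #D⁻¹ • G - B - A * B := by
    rw [← hGB, ← hpart]
    noncomm_ring
  have hA : A ∈ schurSpan D := simpleQuantity_mem_schurSpan
  have hB : B ∈ schurSpan D := simpleQuantity_inv_mem_schurSpan
  rintro a (rfl | rfl | rfl) b (rfl | rfl | rfl)
  all_goals try simp only [one_mul, mul_one, hAA, hBA, hBB]
  all_goals first
    | assumption
    | exact one_mem_schurSpan
    | exact sub_mem (sub_mem (nsmul_mem hG _) hA) hAB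
    | exact sub_mem (sub_mem (nsmul_mem hG _) hB) hAB

theorem differenceCount_eq_of_mul_mem_schurSpan (hdisj : D ∩ D⁻¹ = ∅)
    (hcover : D ∪ D⁻¹ = univ \ {1})
    (hAB : simpleQuantity ℤ D * simpleQuantity ℤ D⁻¹ ∈ schurSpan D) {g h : H} (hg : g ≠ 1)
    (hh : h ≠ 1) : differenceCount D g = differenceCount D h := by
  rw [schurSpan_eq, Submodule.mem_span_insert] at hAB
  obtain ⟨a, y, hy, hAB⟩ := hAB
  obtain ⟨b, c, rfl⟩ := Submodule.mem_span_pair.mp hy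
  have hD : ∀ d ∈ D, (differenceCount D d : ℤ) = b := by
    intro d hd
    have hd1 : d ≠ 1 := ne_of_mem_of_not_mem hd (one_notMem hcover)
    rw [← coeff_simpleQuantity_mul_inv, hAB]
    simp only [coeff_add, coeff_smul, Finsupp.add_apply, Finsupp.smul_apply, coeff_one_apply,
      coeff_simpleQuantity, if_pos hd, if_neg hd1, if_neg (notMem_inv_of_mem hdisj hd),
      smul_eq_mul]
    ring
  have hne : ∀ g ≠ 1, (differenceCount D g : ℤ) = b := by
    intro g hg
    by_cases hgD : g ∈ D
    · exact hD g hgD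
    · rw [← differenceCount_inv]
      exact hD _ (inv_mem_of_notMem hcover hg hgD)
  exact_mod_cast (hne g hg).trans (hne h hh).symm

end Partition

end SchurPartition

open SchurPartition in
/-- `D` is a skew Hadamard difference set in the finite group `H`
(i.e. `H∖{1}` is the disjoint union of `D` and `D⁻¹` and every `h ≠ 1` has exactly
`(|H|-3)/4` representations `d·d'⁻¹`) iff `{{1}, D, D⁻¹}` is a Schur partition of `H`
(i.e. these sets partition `H` and the ℤ-span of their indicator elements is closed
under multiplication in ℤ[H]). -/
theorem stmt_2 {H : Type*} [Group H] [Fintype H] [DecidableEq H] (D : Finset H) :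
    (D ∩ D⁻¹ = ∅ ∧ D ∪ D⁻¹ = Finset.univ \ {1} ∧
      ∀ h : H, h ≠ 1 →
        ((D ×ˢ D).filter (fun x => x.1 * x.2⁻¹ = h)).card = (Fintype.card H - 3) / 4)
    ↔
    (D ∩ D⁻¹ = ∅ ∧ D ∪ D⁻¹ = Finset.univ \ {1} ∧
      ∀ x y : MonoidAlgebra ℤ H, x ∈ schurSpan D → y ∈ schurSpan D →
        x * y ∈ schurSpan D) := by
  refine and_congr_right fun hdisj => and_congr_right fun hcover => ⟨fun hdiff => ?_, ?_⟩
  · have hAB : simpleQuantity ℤ D * simpleQuantity ℤ D⁻¹ ∈ schurSpan D := by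
      rw [simpleQuantity_mul_inv_of_differenceCount hdiff]
      exact add_mem (Submodule.smul_mem _ _ one_mem_schurSpan)
        (Submodule.smul_mem _ _ (simpleQuantity_univ_mem_schurSpan hdisj hcover))
    exact fun x y => mul_mem_schurSpan hdisj hcover hAB
  · intro hmul h hh
    have hAB := hmul _ _ simpleQuantity_mem_schurSpan simpleQuantity_inv_mem_schurSpan
    exact differenceCount_eq_of_forall_ne_one hdisj hcover
      (fun g hg => differenceCount_eq_of_mul_mem_schurSpan hdisj hcover hAB hg hh) hh
end

section
/- Let q = pⁿ with p an odd prime, q ≡ 3 (mod 4), and let z = Σ_{x ∈ (F_q^*)²} τ(x) where τ(x) = ω_p^{tr(x)} is the canonical additive character summed over nonzero squares. Then z = (-1 ± √(-q))/2; in particular z + z̄ = -1 and (z - z̄)² = -q. -/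
/-!
Every nonzero element is either a square or a nonsquare, so `z` and the sum `z'` of the
character over the nonsquares add up to `Σ_{x ≠ 0} τ(x) = -1`. Since `q ≡ 3 (mod 4)`, `-1` is
a nonsquare, so `x ↦ -x` exchanges squares and nonsquares and `z' = Σ τ(-x) = z̄`. Finally
`z - z̄` is the quadratic Gauss sum, whose square is `χ(-1) q = -q`; together with `z + z̄ = -1`
this pins `z` down to the two roots `(-1 ± i√q)/2`.
-/

open scoped Classical

/-- The set of nonzero squares of a finite field, as a `Finset`. -/
noncomputable def sqFinset (F : Type*) [Field F] [Fintype F] : Finset F :=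
  Finset.univ.filter fun x : F => x ≠ 0 ∧ IsSquare x

/-- `z = Σ_{x ∈ (F_q^*)²} τ(x)`, the sum of the additive character over the
nonzero squares. -/
noncomputable def zval {F : Type*} [Field F] [Fintype F] (ψ : AddChar F ℂ) : ℂ :=
  ∑ x ∈ sqFinset F, ψ x

noncomputable def nonsqFinset (F : Type*) [Field F] [Fintype F] : Finset F :=
  Finset.univ.filter fun x : F => x ≠ 0 ∧ ¬IsSquare x

open Finset

theorem AddChar.sum_erase_zero_eq_neg_one {G R : Type*} [AddGroup G] [Fintype G] [CommRing R]
    [IsDomain R] {ψ : AddChar G R} (hψ : ψ ≠ 1) : ∑ x ∈ univ.erase 0, ψ x = -1 := by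
  have h := add_sum_erase univ (fun x => ψ x) (mem_univ 0)
  rw [AddChar.sum_eq_zero_of_ne_one hψ, AddChar.map_zero_eq_one] at h
  linear_combination h

theorem Complex.eq_I_mul_sqrt_or_eq_neg_of_sq_eq_neg {w : ℂ} {r : ℝ} (hr : 0 ≤ r)
    (h : w ^ 2 = -(r : ℂ)) :
    w = I * (Real.sqrt r : ℂ) ∨ w = -(I * (Real.sqrt r : ℂ)) := by
  rw [← sq_eq_sq_iff_eq_or_eq_neg, h, mul_pow, I_sq, ← ofReal_pow, Real.sq_sqrt hr]
  ring

section SquareSums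

variable {F : Type*} [Field F] [Fintype F]

@[simp]
theorem mem_sqFinset {x : F} : x ∈ sqFinset F ↔ x ≠ 0 ∧ IsSquare x := by
  simp [sqFinset]

@[simp]
theorem mem_nonsqFinset {x : F} : x ∈ nonsqFinset F ↔ x ≠ 0 ∧ ¬IsSquare x := by
  simp [nonsqFinset]

theorem disjoint_sqFinset_nonsqFinset : Disjoint (sqFinset F) (nonsqFinset F) :=
  disjoint_left.2 fun _ hS hT => (mem_nonsqFinset.1 hT).2 (mem_sqFinset.1 hS).2

theorem sqFinset_union_nonsqFinset : sqFinset F ∪ nonsqFinset F = univ.erase 0 := by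
  ext x
  simp only [mem_union, mem_sqFinset, mem_nonsqFinset, mem_erase, mem_univ, and_true]
  tauto

theorem isSquare_neg_iff_not_isSquare (h : ¬IsSquare (-1 : F)) {x : F} (hx : x ≠ 0) :
    IsSquare (-x) ↔ ¬IsSquare x := by
  rw [← quadraticChar_neg_one_iff_not_isSquare] at h ⊢
  rw [← quadraticChar_one_iff_isSquare (neg_ne_zero.2 hx), neg_eq_neg_one_mul, map_mul, h]
  rcases quadraticChar_dichotomy hx with hx | hx <;> simp [hx]

theorem sum_sqFinset_neg (h : ¬IsSquare (-1 : F)) {M : Type*} [AddCommMonoid M] (f : F → M) :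
    ∑ x ∈ sqFinset F, f (-x) = ∑ x ∈ nonsqFinset F, f x :=
  sum_equiv (Equiv.neg F) (fun x => by
      by_cases hx : x = 0
      · simp [hx]
      · simp [hx, isSquare_neg_iff_not_isSquare h hx])
    fun _ _ => rfl

theorem sum_sqFinset_add_sum_nonsqFinset {R : Type*} [CommRing R] [IsDomain R]
    {ψ : AddChar F R} (hψ : ψ ≠ 1) :
    ∑ x ∈ sqFinset F, ψ x + ∑ x ∈ nonsqFinset F, ψ x = -1 := by
  rw [← sum_union disjoint_sqFinset_nonsqFinset, sqFinset_union_nonsqFinset,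
    AddChar.sum_erase_zero_eq_neg_one hψ]

theorem gaussSum_quadraticChar {R : Type*} [CommRing R] (ψ : AddChar F R) :
    gaussSum ((quadraticChar F).ringHomComp (Int.castRingHom R)) ψ =
      ∑ x ∈ sqFinset F, ψ x - ∑ x ∈ nonsqFinset F, ψ x := by
  have hχ : ∀ x ∈ univ.erase 0, ((quadraticChar F).ringHomComp (Int.castRingHom R)) x * ψ x =
      if IsSquare x then ψ x else -ψ x := by
    intro x hx
    have hx : x ≠ 0 := ne_of_mem_erase hx
    split_ifs with hsq
    · simp [MulChar.ringHomComp_apply, (quadraticChar_one_iff_isSquare hx).2 hsq]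
    · simp [MulChar.ringHomComp_apply, quadraticChar_neg_one_iff_not_isSquare.2 hsq]
  rw [gaussSum, ← add_sum_erase _ _ (mem_univ 0), MulChar.map_zero, zero_mul, zero_add,
    sum_congr rfl hχ, sum_ite, sum_neg_distrib, ← sub_eq_add_neg]
  congr 2 <;> ext x <;> simp [and_comm]

theorem gaussSum_quadraticChar_sq (hF : ringChar F ≠ 2) {R : Type*} [CommRing R] [IsDomain R]
    [CharZero R] {ψ : AddChar F R} (hψ : ψ.IsPrimitive) :
    gaussSum ((quadraticChar F).ringHomComp (Int.castRingHom R)) ψ ^ 2 =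
      quadraticChar F (-1) * Fintype.card F := by
  rw [gaussSum_sq ((MulChar.ringHomComp_ne_one_iff Int.cast_injective).2 (quadraticChar_ne_one hF))
    ((quadraticChar_isQuadratic F).comp _) hψ, MulChar.ringHomComp_apply]
  rfl

theorem conj_zval (h : ¬IsSquare (-1 : F)) (ψ : AddChar F ℂ) :
    starRingEnd ℂ (zval ψ) = ∑ x ∈ nonsqFinset F, ψ x := by
  rw [zval, map_sum, ← sum_sqFinset_neg h]
  exact sum_congr rfl fun x _ => (AddChar.map_neg_eq_conj ψ x).symm

end SquareSums

/-- for `q ≡ 3 (mod 4)` and a nontrivial additive character `τ`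
of `F_q`, the sum `z` of `τ` over the nonzero squares satisfies
`z = (-1 ± √(-q))/2`; in particular `z + z̄ = -1` and `(z - z̄)² = -q`. -/
theorem stmt_3 {F : Type*} [Field F] [Fintype F]
    (hq : Fintype.card F % 4 = 3) (ψ : AddChar F ℂ) (hψ : ψ ≠ 1) :
    zval ψ + (starRingEnd ℂ) (zval ψ) = -1 ∧
    (zval ψ - (starRingEnd ℂ) (zval ψ)) ^ 2 = -(Fintype.card F : ℂ) ∧
    (zval ψ = (-1 + Complex.I * (Real.sqrt (Fintype.card F) : ℂ)) / 2 ∨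
     zval ψ = (-1 - Complex.I * (Real.sqrt (Fintype.card F) : ℂ)) / 2) := by
  have hneg : ¬IsSquare (-1 : F) := by
    rw [FiniteField.isSquare_neg_one_iff, not_not, hq]
  have hchar : ringChar F ≠ 2 := fun h => hneg (by rw [neg_one_eq_one_iff.2 h]; exact IsSquare.one)
  have hsum : zval ψ + starRingEnd ℂ (zval ψ) = -1 := by
    rw [conj_zval hneg]
    exact sum_sqFinset_add_sum_nonsqFinset hψ
  have hdiff : (zval ψ - starRingEnd ℂ (zval ψ)) ^ 2 = -(Fintype.card F : ℂ) := by
    rw [conj_zval hneg, zval, ← gaussSum_quadraticChar,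
      gaussSum_quadraticChar_sq hchar (.of_ne_one hψ),
      quadraticChar_neg_one_iff_not_isSquare.2 hneg]
    simp
  refine ⟨hsum, hdiff, ?_⟩
  rcases Complex.eq_I_mul_sqrt_or_eq_neg_of_sq_eq_neg (Nat.cast_nonneg _)
    (by exact_mod_cast hdiff) with h | h
  · exact .inl (by linear_combination (hsum + h) / 2)
  · exact .inr (by linear_combination (hsum + h) / 2)
end

section
/- With q ≡ 3 (mod 4) an odd prime power, V = F_q³ and A = ES as above, the sets O_i = A·(i,0,1)ᵗ for i ∈ F_q, O_∞ = A·(0,1,0)ᵗ, O_• = A·(1,0,0)ᵗ, together with their negatives -O_i, -O_∞, -O_•, form a complete list of the orbits of A on V∖{0}, and these 2(q+2) orbits are pairwise disjoint. -/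
/-!
The matrix `s • E(x)` multiplies the last nonzero coordinate of a vector (its `pivot`) by the
square `s`, and, when `w₂ ≠ 0`, it preserves `(w₀w₂ - w₁²/2) / w₂²`, because `E(x)` preserves
the quadratic form `w₀w₂ - w₁²/2`. So the label of `w` (this ratio, or `∞`/`•` according to the
position of the pivot) and the square class of its pivot are `A`-invariants; conversely a vector
with the same invariants as a base point is reached from it by taking `s` to be its pivot.
As `q ≡ 3 (mod 4)`, `-1` is a non-square, so negation swaps the two square classes: the sets
`O` and `-O` with a given label are exactly the vectors with that label and the two classes.
-/

/-- The unitriangular matrix E(x) with rows (1, x, x²/2), (0,1,x), (0,0,1). -/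
def Emat {F : Type*} [Field F] (x : F) : Matrix (Fin 3) (Fin 3) F :=
  !![1, x, x ^ 2 / 2; 0, 1, x; 0, 0, 1]

/-- The set `A = E·S = {s • E(x) : x ∈ F_q, s a nonzero square}` of matrices. -/
def Aset (F : Type*) [Field F] : Set (Matrix (Fin 3) (Fin 3) F) :=
  {m | ∃ x s : F, s ≠ 0 ∧ IsSquare s ∧ m = s • Emat x}

/-- Base points of the A-orbits: `(i,0,1)ᵗ` for `i ∈ F_q`, `(0,1,0)ᵗ` (= O_∞),
`(1,0,0)ᵗ` (= O_•). -/
def baseVec {F : Type*} [Field F] : F ⊕ Fin 2 → Fin 3 → F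
  | Sum.inl i => ![i, 0, 1]
  | Sum.inr j => if j = 0 then ![0, 1, 0] else ![1, 0, 0]

/-- The 2(q+2) candidate orbits `O_i` and `-O_i`, `i ∈ I = F_q ∪ {∞,•}`. -/
def orbSet {F : Type*} [Field F] (ib : (F ⊕ Fin 2) × Bool) : Set (Fin 3 → F) :=
  {w | ∃ a ∈ Aset F, w = if ib.2 then a.mulVec (baseVec ib.1)
                          else -(a.mulVec (baseVec ib.1))}

lemma eq_vec3 {α : Type*} {w : Fin 3 → α} {a b c : α}
    (h0 : w 0 = a) (h1 : w 1 = b) (h2 : w 2 = c) : w = ![a, b, c] := by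
  ext j
  fin_cases j <;> assumption

section Orbits

variable {F : Type*} [Field F]

lemma Emat_mul_Emat (h2 : (2 : F) ≠ 0) (x y : F) : Emat x * Emat y = Emat (x + y) := by
  have corner : y ^ 2 / 2 + x * y + x ^ 2 / 2 = (x + y) ^ 2 / 2 := by
    field_simp
    ring
  ext i j
  fin_cases i <;> fin_cases j <;> simp [Emat, Matrix.mul_apply, Fin.sum_univ_three] <;>
    first | ring1 | exact corner

lemma mul_mem_Aset (h2 : (2 : F) ≠ 0) {a b : Matrix (Fin 3) (Fin 3) F}
    (ha : a ∈ Aset F) (hb : b ∈ Aset F) : a * b ∈ Aset F := by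
  obtain ⟨x, s, hs, hsq, rfl⟩ := ha
  obtain ⟨y, t, ht, htq, rfl⟩ := hb
  refine ⟨x + y, s * t, mul_ne_zero hs ht, hsq.mul htq, ?_⟩
  rw [Matrix.smul_mul, Matrix.mul_smul, smul_smul, Emat_mul_Emat h2]

lemma smul_Emat_mulVec (s x : F) (v : Fin 3 → F) :
    (s • Emat x).mulVec v =
      ![s * (v 0 + x * v 1 + x ^ 2 / 2 * v 2), s * (v 1 + x * v 2), s * v 2] := by
  ext j
  fin_cases j <;> simp [Emat, Matrix.mulVec, dotProduct, Fin.sum_univ_three] <;> ring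

open Classical in
noncomputable def pivot (w : Fin 3 → F) : F :=
  if w 2 ≠ 0 then w 2 else if w 1 ≠ 0 then w 1 else w 0

open Classical in
noncomputable def orbitLabel (w : Fin 3 → F) : F ⊕ Fin 2 :=
  if w 2 ≠ 0 then Sum.inl ((w 0 * w 2 - w 1 ^ 2 / 2) / w 2 ^ 2)
  else if w 1 ≠ 0 then Sum.inr 0 else Sum.inr 1

lemma pivot_neg (w : Fin 3 → F) : pivot (-w) = -pivot w := by
  unfold pivot
  by_cases h2 : w 2 = 0 <;> by_cases h1 : w 1 = 0 <;> simp [h2, h1]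

lemma orbitLabel_neg (w : Fin 3 → F) : orbitLabel (-w) = orbitLabel w := by
  unfold orbitLabel
  by_cases h2 : w 2 = 0 <;> by_cases h1 : w 1 = 0 <;> simp [h2, h1]

lemma pivot_ne_zero {w : Fin 3 → F} (hw : w ≠ 0) : pivot w ≠ 0 := by
  unfold pivot
  split_ifs with h2 h1
  · exact h2
  · exact h1
  · contrapose! hw
    ext j
    fin_cases j <;> simp_all

lemma smul_Emat_mulVec_baseVec_inl (s x i : F) :
    (s • Emat x).mulVec (baseVec (Sum.inl i)) = ![s * (i + x ^ 2 / 2), s * x, s] := by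
  simp [baseVec, smul_Emat_mulVec]

lemma smul_Emat_mulVec_baseVec_inr_zero (s x : F) :
    (s • Emat x).mulVec (baseVec (Sum.inr 0)) = ![s * x, s, 0] := by
  simp [baseVec, smul_Emat_mulVec]

lemma smul_Emat_mulVec_baseVec_inr_one (s x : F) :
    (s • Emat x).mulVec (baseVec (Sum.inr 1)) = ![s, 0, 0] := by
  simp [baseVec, smul_Emat_mulVec]

lemma mem_orbSet_true_iff (h2 : (2 : F) ≠ 0) {k : F ⊕ Fin 2} {w : Fin 3 → F} :
    w ∈ orbSet (k, true) ↔ w ≠ 0 ∧ orbitLabel w = k ∧ IsSquare (pivot w) := by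
  constructor
  · rintro ⟨_, ⟨x, s, hs, hsq, rfl⟩, rfl⟩
    rcases k with i | j
    · have hlabel : (s * (i + x ^ 2 / 2) * s - (s * x) ^ 2 / 2) / s ^ 2 = i := by
        field_simp
        ring
      simp [smul_Emat_mulVec_baseVec_inl, orbitLabel, pivot, hs, hsq, hlabel]
    · obtain rfl | rfl : j = 0 ∨ j = 1 := by omega
      · simp [smul_Emat_mulVec_baseVec_inr_zero, orbitLabel, pivot, hs, hsq]
      · simp [smul_Emat_mulVec_baseVec_inr_one, orbitLabel, pivot, hs, hsq]
  · rintro ⟨hw, rfl, hsq⟩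
    rcases ne_or_eq (w 2) 0 with hw2 | hw2
    · have hlabel : orbitLabel w = Sum.inl ((w 0 * w 2 - w 1 ^ 2 / 2) / w 2 ^ 2) := if_pos hw2
      refine ⟨w 2 • Emat (w 1 / w 2),
        ⟨_, w 2, hw2, by simpa [pivot, hw2] using hsq, rfl⟩, ?_⟩
      rw [if_pos rfl, hlabel, smul_Emat_mulVec_baseVec_inl]
      exact eq_vec3 (by field_simp; ring) (by field_simp) rfl
    rcases ne_or_eq (w 1) 0 with hw1 | hw1
    · have hlabel : orbitLabel w = Sum.inr 0 := by simp [orbitLabel, hw2, hw1]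
      refine ⟨w 1 • Emat (w 0 / w 1),
        ⟨_, w 1, hw1, by simpa [pivot, hw2, hw1] using hsq, rfl⟩, ?_⟩
      rw [if_pos rfl, hlabel, smul_Emat_mulVec_baseVec_inr_zero]
      exact eq_vec3 (by field_simp) rfl hw2
    · have hw0 : w 0 ≠ 0 := by simpa [pivot, hw2, hw1] using pivot_ne_zero hw
      have hlabel : orbitLabel w = Sum.inr 1 := by simp [orbitLabel, hw2, hw1]
      refine ⟨w 0 • Emat 0, ⟨0, w 0, hw0, by simpa [pivot, hw2, hw1] using hsq, rfl⟩, ?_⟩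
      rw [if_pos rfl, hlabel, smul_Emat_mulVec_baseVec_inr_one]
      exact eq_vec3 rfl hw1 hw2

lemma mem_orbSet_false_iff {k : F ⊕ Fin 2} {w : Fin 3 → F} :
    w ∈ orbSet (k, false) ↔ -w ∈ orbSet (k, true) := by
  simp [orbSet, neg_eq_iff_eq_neg]

end Orbits

section FiniteField

variable {F : Type*} [Field F] [Fintype F]

lemma isSquare_neg_iff_not_isSquare_s5 (hq : Fintype.card F % 4 = 3) {s : F} (hs : s ≠ 0) :
    IsSquare (-s) ↔ ¬IsSquare s := by
  classical
  have h1 : quadraticChar F (-1) = -1 :=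
    quadraticChar_neg_one_iff_not_isSquare.mpr <| by
      rw [FiniteField.isSquare_neg_one_iff (F := F)]
      omega
  rw [← quadraticChar_one_iff_isSquare (neg_ne_zero.mpr hs),
    ← quadraticChar_neg_one_iff_not_isSquare, neg_eq_neg_one_mul, map_mul, h1]
  omega

lemma two_ne_zero_of_card_mod_four_eq_three (hq : Fintype.card F % 4 = 3) : (2 : F) ≠ 0 :=
  Ring.two_ne_zero fun h => by have := FiniteField.even_card_iff_char_two.mp h; omega

lemma mem_orbSet_iff (hq : Fintype.card F % 4 = 3) {j : (F ⊕ Fin 2) × Bool} {w : Fin 3 → F} :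
    w ∈ orbSet j ↔ w ≠ 0 ∧ orbitLabel w = j.1 ∧ (IsSquare (pivot w) ↔ j.2) := by
  have h2 := two_ne_zero_of_card_mod_four_eq_three hq
  obtain ⟨k, _ | _⟩ := j
  · rw [mem_orbSet_false_iff, mem_orbSet_true_iff h2, pivot_neg, orbitLabel_neg, neg_ne_zero]
    refine and_congr_right fun hw => and_congr_right' ?_
    simpa using isSquare_neg_iff_not_isSquare_s5 hq (pivot_ne_zero hw)
  · simp [mem_orbSet_true_iff h2]

end FiniteField

/-- the sets `O_i`, `-O_i` (`i ∈ F_q ∪ {∞,•}`) are pairwise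
disjoint, their union is `V∖{0}`, and each is `A`-invariant (hence each is a
full `A`-orbit, being the `A`-image of a single point); so they form a complete
list of the nonzero orbits of `A` on `V = F_q³`. -/
theorem stmt_5 {F : Type*} [Field F] [Fintype F] (hq : Fintype.card F % 4 = 3) :
    (∀ j k : (F ⊕ Fin 2) × Bool, j ≠ k → orbSet j ∩ orbSet k = (∅ : Set (Fin 3 → F))) ∧
    (⋃ j : (F ⊕ Fin 2) × Bool, orbSet j) = {w : Fin 3 → F | w ≠ 0} ∧
    (∀ j : (F ⊕ Fin 2) × Bool, ∀ a ∈ Aset F, ∀ w ∈ orbSet j, a.mulVec w ∈ orbSet j) := by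
  refine ⟨fun j k hjk => ?_, ?_, ?_⟩
  · refine Set.eq_empty_of_forall_notMem fun w ⟨hwj, hwk⟩ => hjk ?_
    rw [mem_orbSet_iff hq] at hwj hwk
    exact Prod.ext (hwj.2.1.symm.trans hwk.2.1) (Bool.eq_iff_iff.2 (hwj.2.2.symm.trans hwk.2.2))
  · classical
    ext w
    simp only [Set.mem_iUnion, mem_orbSet_iff hq, Set.mem_ofPred_eq]
    exact ⟨fun ⟨_, hw, _⟩ => hw,
      fun hw => ⟨(orbitLabel w, decide (IsSquare (pivot w))), hw, rfl, by simp⟩⟩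
  · rintro ⟨k, b⟩ a ha w ⟨a', ha', rfl⟩
    refine ⟨a * a', mul_mem_Aset (two_ne_zero_of_card_mod_four_eq_three hq) ha ha', ?_⟩
    cases b <;> simp [Matrix.mulVec_neg, Matrix.mulVec_mulVec]
end

section
/- Let q ≡ 3 (mod 4), V = F_q³, and E ≤ GL₃(F_q) the group of matrices E(x) (x ∈ F_q) that are unitriangular with superdiagonal entries (x, x) and corner entry x²/2. Every element N of GL(V) (as F_p-linear automorphisms of V) normalizing E is an upper triangular block matrix of the form: N acts preserving the subspaces C_V(E) = {(x,0,0)ᵗ} and [E,V] = {(x,y,0)ᵗ}, and N lies in the group F·K·L·E, where F consists of coordinatewise Galois automorphisms f ∈ Gal(F_q/F_p), K = {diag(α, αβ, αβ²) : α, β ∈ F_q^*}, and L = {I + ℓ·e₁₃ : ℓ ∈ End_{F_p}(F_q)}. That is, N_{Aut(V)}(E) = FKLE. -/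
section

open Matrix Function

namespace Emat

variable {F : Type*} [Field F]

@[simp] lemma mulVec_apply_zero (x : F) (v : Fin 3 → F) :
    (Emat x *ᵥ v) 0 = v 0 + x * v 1 + x ^ 2 / 2 * v 2 := by
  simp [Emat, mulVec, dotProduct, Fin.sum_univ_three]

@[simp] lemma mulVec_apply_one (x : F) (v : Fin 3 → F) : (Emat x *ᵥ v) 1 = v 1 + x * v 2 := by
  simp [Emat, mulVec, dotProduct, Fin.sum_univ_three]

@[simp] lemma mulVec_apply_two (x : F) (v : Fin 3 → F) : (Emat x *ᵥ v) 2 = v 2 := by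
  simp [Emat, mulVec, dotProduct, Fin.sum_univ_three]

lemma mul_Emat (h2 : (2 : F) ≠ 0) (a b : F) : Emat a * Emat b = Emat (a + b) := by
  ext i j
  fin_cases i <;> fin_cases j <;> simp [Emat, Matrix.mul_apply, Fin.sum_univ_three] <;>
    first | ring1 | (field_simp; ring)

lemma eq_of_mulVec_eq {a b : F} (h : ∀ v, Emat a *ᵥ v = Emat b *ᵥ v) : a = b := by
  simpa using congrFun (h (Pi.single 1 1)) 0

end Emat

namespace AddMonoidHom

variable {ι M : Type*} [DecidableEq ι] [AddCommMonoid M]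

def entry (g : (ι → M) →+ (ι → M)) (i j : ι) : M →+ M :=
  (Pi.evalAddMonoidHom (fun _ => M) i).comp (g.comp (AddMonoidHom.single (fun _ => M) j))

lemma entry_apply (g : (ι → M) →+ (ι → M)) (i j : ι) (t : M) :
    g.entry i j t = g (Pi.single j t) i :=
  rfl

lemma apply_eq_sum_entry [Fintype ι] (g : (ι → M) →+ (ι → M)) (v : ι → M) (i : ι) :
    g v i = ∑ j, g.entry i j (v j) := by
  conv_lhs => rw [← Finset.univ_sum_single v]
  simp [entry]

end AddMonoidHom

variable {F : Type*} [Field F]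

section FunctionalEquation

variable {y φ ψ : F → F}

lemma map_eq_div_mul_map_one (hy1 : y 1 ≠ 0) (h : ∀ x t, φ (x * t) = y x * ψ t) (t : F) :
    φ t = y t / y 1 * φ 1 ∧ ψ t = y t / y 1 * ψ 1 := by
  have ht1 := h t 1
  have h1t := h 1 t
  have h11 := h 1 1
  simp only [mul_one, one_mul] at ht1 h1t h11
  constructor
  · rw [ht1, h11]; field_simp
  · apply mul_left_cancel₀ hy1
    rw [← h1t, ht1]; field_simp

lemma map_mul_mul_map_one (hy1 : y 1 ≠ 0) (hψ : ψ 1 ≠ 0) (h : ∀ x t, φ (x * t) = y x * ψ t)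
    (s t : F) : y (s * t) * y 1 = y s * y t := by
  have hst := h s t
  have h11 := h 1 1
  rw [(map_eq_div_mul_map_one hy1 h (s * t)).1, (map_eq_div_mul_map_one hy1 h t).2] at hst
  rw [mul_one] at h11
  rw [h11] at hst
  field_simp at hst
  exact hst

end FunctionalEquation

def AddMonoidHom.ringHomOfMapMul (y : F →+ F) (hy1 : y 1 ≠ 0)
    (hmul : ∀ s t, y (s * t) * y 1 = y s * y t) : F →+* F where
  toFun t := y t / y 1
  map_one' := div_self hy1
  map_mul' s t := by
    field_simp
    linear_combination hmul s t
  map_zero' := by simp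
  map_add' s t := by simp [add_div]

lemma AddMonoidHom.ringHomOfMapMul_apply (y : F →+ F) (hy1 : y 1 ≠ 0)
    (hmul : ∀ s t, y (s * t) * y 1 = y s * y t) (t : F) :
    y.ringHomOfMapMul hy1 hmul t = y t / y 1 :=
  rfl

lemma AddMonoidHom.ringHomOfMapMul_surjective {y : F →+ F} (hy : Surjective y)
    (hy1 : y 1 ≠ 0) (hmul : ∀ s t, y (s * t) * y 1 = y s * y t) :
    Surjective (y.ringHomOfMapMul hy1 hmul) := fun s => by
  obtain ⟨t, ht⟩ := hy (s * y 1)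
  exact ⟨t, by simp [ringHomOfMapMul_apply, ht, hy1]⟩

def ConjugatesEmat (g : (Fin 3 → F) → Fin 3 → F) (y : F → F) : Prop :=
  ∀ x v, g (Emat x *ᵥ v) = Emat (y x) *ᵥ g v

-- `AddAut` is an additive group, so `-g` is the inverse `g.symm`.
lemma exists_conjugatesEmat_iff (g : AddAut (Fin 3 → F)) :
    (∀ x : F, ∃ y : F, ∀ v, g (Emat x *ᵥ (-g) v) = Emat y *ᵥ v) ↔
      ∃ y, ConjugatesEmat g y := by
  constructor
  · intro h
    choose y hy using h
    exact ⟨y, fun x v => by simpa [AddAut.neg_apply] using hy x (g v)⟩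
  · rintro ⟨y, hy⟩ x
    exact ⟨y x, fun v => by simp [hy x, AddAut.neg_apply]⟩

lemma exists_conjugatesEmat_neg_iff (g : AddAut (Fin 3 → F)) :
    (∀ x : F, ∃ y : F, ∀ v, (-g) (Emat x *ᵥ g v) = Emat y *ᵥ v) ↔
      ∃ y, ConjugatesEmat ⇑(-g) y := by
  simpa only [neg_neg] using exists_conjugatesEmat_iff (-g)

-- the element `f ∘ diag(α, αβ, αβ²) ∘ (1 + ℓ e₁₃) ∘ E(x)` of `FKLE`
def normalForm (f : F ≃+* F) (α β : F) (l : F →+ F) (x : F) (v : Fin 3 → F) : Fin 3 → F :=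
  ![f (α * ((Emat x *ᵥ v) 0 + l ((Emat x *ᵥ v) 2))), f (α * β * (Emat x *ᵥ v) 1),
    f (α * β ^ 2 * (Emat x *ᵥ v) 2)]

lemma conjugatesEmat_normalForm (f : F ≃+* F) (α : F) {β : F} (hβ : β ≠ 0) (l : F →+ F)
    (x : F) : ConjugatesEmat (normalForm f α β l x) (fun a => f (a / β)) := by
  intro a v
  have hfβ : f β ≠ 0 := (map_ne_zero f).mpr hβ
  ext i
  fin_cases i <;> simp [normalForm, map_ofNat] <;> field_simp <;> ring

lemma exists_normalForm_eq {g : (Fin 3 → F) → Fin 3 → F} (σ : F ≃+* F) {μ e : F} (d : F)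
    (C : F →+ F) (hμ : μ ≠ 0) (he : e ≠ 0)
    (hg : ∀ v, g v = ![σ (v 0) * (μ ^ 2 * e) + σ (v 1) * (μ * d) + C (v 2),
      σ (v 1) * (μ * e) + σ (v 2) * d, σ (v 2) * e]) :
    ∃ (f : F ≃+* F) (α β : F) (l : F →+ F) (x : F), α ≠ 0 ∧ β ≠ 0 ∧
      ∀ v, g v = normalForm f α β l x v := by
  set α := σ.symm (μ ^ 2 * e)
  set x := σ.symm (d / (μ * e))
  have hα : α ≠ 0 := by simp [α, hμ, he]
  let l : F →+ F := AddMonoidHom.mk' (fun t => σ.symm (C t) / α - x ^ 2 / 2 * t)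
    (fun s t => by simp only [map_add]; ring)
  refine ⟨σ, α, σ.symm μ⁻¹, l, x, hα, by simpa using hμ, fun v => ?_⟩
  ext i
  fin_cases i <;> simp [normalForm, hg, l, α, x] <;> field_simp

namespace ConjugatesEmat

section

variable {g : (Fin 3 → F) → Fin 3 → F} {y : F → F}

lemma map_add (h2 : (2 : F) ≠ 0) (hg : Surjective g) (h : ConjugatesEmat g y) (a b : F) :
    y (a + b) = y a + y b := by
  refine Emat.eq_of_mulVec_eq fun w => ?_
  obtain ⟨v, rfl⟩ := hg w
  rw [← h, ← Emat.mul_Emat h2, ← mulVec_mulVec, h, h, mulVec_mulVec, Emat.mul_Emat h2]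

lemma surjective {g : AddAut (Fin 3 → F)} {y' : F → F} (h : ConjugatesEmat g y)
    (h' : ConjugatesEmat ⇑(-g) y') : Surjective y := by
  refine fun s => ⟨y' s, Emat.eq_of_mulVec_eq fun v => ?_⟩
  have := h (y' s) ((-g) v)
  rw [← h', AddAut.neg_apply, AddAut.neg_apply, AddEquiv.apply_symm_apply,
    AddEquiv.apply_symm_apply] at this
  exact this.symm

lemma neg {g : AddAut (Fin 3 → F)} (h : ConjugatesEmat g y) (hy : Surjective y) :
    ConjugatesEmat ⇑(-g) (surjInv hy) := by
  intro x w
  conv_lhs => rw [← surjInv_eq hy x, ← g.apply_symm_apply w, ← h]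
  simp [AddAut.neg_apply]

end

section

variable {g : (Fin 3 → F) →+ (Fin 3 → F)} {y : F → F}

lemma sum_entry (h : ConjugatesEmat g y) (x t : F) (i j : Fin 3) :
    ∑ k, g.entry i k (Emat x k j * t) = ∑ k, Emat (y x) i k * g.entry k j t := by
  have := congrFun (h x (Pi.single j t)) i
  rw [g.apply_eq_sum_entry, mulVec_single] at this
  simpa [mulVec, dotProduct, g.entry_apply _ j] using this

lemma entry_two_zero (h : ConjugatesEmat g y) : g.entry 2 0 = 0 := by
  ext t
  simpa [Fin.sum_univ_three, Emat] using h.sum_entry 1 t 2 1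

lemma entry_two_one (h : ConjugatesEmat g y) : g.entry 2 1 = 0 := by
  ext t
  simpa [Fin.sum_univ_three, Emat, h.entry_two_zero] using h.sum_entry 1 t 2 2

lemma entry_one_zero (h : ConjugatesEmat g y) : g.entry 1 0 = 0 := by
  ext t
  simpa [Fin.sum_univ_three, Emat, h.entry_two_one] using h.sum_entry 1 t 1 1

lemma entry_zero_zero_mul (h : ConjugatesEmat g y) (x t : F) :
    g.entry 0 0 (x * t) = y x * g.entry 1 1 t := by
  have := h.sum_entry x t 0 1
  simp [Fin.sum_univ_three, Emat, h.entry_two_one] at this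
  linear_combination this

lemma entry_one_one_mul (h : ConjugatesEmat g y) (x t : F) :
    g.entry 1 1 (x * t) = y x * g.entry 2 2 t := by
  have := h.sum_entry x t 1 2
  simp [Fin.sum_univ_three, Emat, h.entry_one_zero] at this
  linear_combination this

lemma entry_zero_one_mul (h2 : (2 : F) ≠ 0) (hodd : ∀ x, y (-x) = -y x)
    (h : ConjugatesEmat g y) (x t : F) : g.entry 0 1 (x * t) = y x * g.entry 1 2 t := by
  have hpos := h.sum_entry x t 0 2
  have hneg := h.sum_entry (-x) t 0 2
  simp [Fin.sum_univ_three, Emat, hodd] at hpos hneg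
  exact mul_left_cancel₀ h2 (by linear_combination hpos - hneg)

lemma entry_zero_zero_one_ne_zero (hg : Injective g) (h : ConjugatesEmat g y) :
    g.entry 0 0 1 ≠ 0 := by
  intro h0
  have : g (Pi.single 0 1) = 0 := by
    ext i
    fin_cases i
    · exact h0
    · exact DFunLike.congr_fun h.entry_one_zero 1
    · exact DFunLike.congr_fun h.entry_two_zero 1
  simpa using (injective_iff_map_eq_zero g).mp hg _ this

lemma map_one_ne_zero (hg : Injective g) (h : ConjugatesEmat g y) : y 1 ≠ 0 := by
  have := h.entry_zero_zero_one_ne_zero hg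
  rw [← one_mul 1, h.entry_zero_zero_mul] at this
  exact left_ne_zero_of_mul this

lemma entry_two_two_one_ne_zero (hg : Injective g) (h : ConjugatesEmat g y) :
    g.entry 2 2 1 ≠ 0 := by
  have := h.entry_zero_zero_one_ne_zero hg
  rw [← one_mul 1, h.entry_zero_zero_mul, ← one_mul 1, h.entry_one_one_mul] at this
  exact right_ne_zero_of_mul (right_ne_zero_of_mul this)

end

lemma exists_semilinear_form {g : (Fin 3 → F) →+ (Fin 3 → F)} {y : F →+ F} (h2 : (2 : F) ≠ 0)
    (hg : Injective g) (hy : Surjective y) (h : ConjugatesEmat g y) :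
    ∃ (σ : F ≃+* F) (μ d e : F) (C : F →+ F), μ ≠ 0 ∧ e ≠ 0 ∧ ∀ v, g v =
      ![σ (v 0) * (μ ^ 2 * e) + σ (v 1) * (μ * d) + C (v 2),
        σ (v 1) * (μ * e) + σ (v 2) * d, σ (v 2) * e] := by
  have h00 := h.entry_zero_zero_mul
  have h11 := h.entry_one_one_mul
  have h01 := h.entry_zero_one_mul h2 (map_neg y)
  have hy1 := h.map_one_ne_zero hg
  have hmul := map_mul_mul_map_one hy1 (h.entry_two_two_one_ne_zero hg) h11
  let σ := RingEquiv.ofBijective (y.ringHomOfMapMul hy1 hmul)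
    ⟨RingHom.injective _, AddMonoidHom.ringHomOfMapMul_surjective hy hy1 hmul⟩
  refine ⟨σ, y 1, g.entry 1 2 1, g.entry 2 2 1, g.entry 0 2, hy1,
    h.entry_two_two_one_ne_zero hg, fun v => ?_⟩
  have hσ : ∀ t, σ t = y t / y 1 := y.ringHomOfMapMul_apply hy1 hmul
  have h00' := h00 1 1
  have h11' := h11 1 1
  have h01' := h01 1 1
  rw [mul_one] at h00' h11' h01'
  ext i
  fin_cases i <;> simp [g.apply_eq_sum_entry, Fin.sum_univ_three, h.entry_one_zero,
    h.entry_two_zero, h.entry_two_one, hσ]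
  · rw [(map_eq_div_mul_map_one hy1 h00 (v 0)).1, (map_eq_div_mul_map_one hy1 h01 (v 1)).1,
      h00', h11', h01']
    ring
  · rw [(map_eq_div_mul_map_one hy1 h11 (v 1)).1, (map_eq_div_mul_map_one hy1 h01 (v 2)).2, h11']
  · rw [(map_eq_div_mul_map_one hy1 h11 (v 2)).2]

theorem exists_normalForm (h2 : (2 : F) ≠ 0) {g : AddAut (Fin 3 → F)} {y y' : F → F}
    (h : ConjugatesEmat g y) (h' : ConjugatesEmat ⇑(-g) y') :
    ∃ (f : F ≃+* F) (α β : F) (l : F →+ F) (x : F), α ≠ 0 ∧ β ≠ 0 ∧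
      ∀ v, g v = normalForm f α β l x v := by
  obtain ⟨σ, μ, d, e, C, hμ, he, hg⟩ :=
    exists_semilinear_form (g := g.toAddMonoidHom) (y := .mk' y (h.map_add h2 g.surjective))
      h2 g.injective (h.surjective h') h
  exact exists_normalForm_eq σ d C hμ he hg

end ConjugatesEmat

end

theorem stmt_13_general {F : Type*} [Field F] (p : ℕ) [CharP F p]
    (hp : p ≠ 2) (g : AddAut (Fin 3 → F)) :
    ((∀ x : F, ∃ y : F, ∀ v : Fin 3 → F,
        g ((Emat x).mulVec ((-g) v)) = (Emat y).mulVec v) ∧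
     (∀ x : F, ∃ y : F, ∀ v : Fin 3 → F,
        (-g) ((Emat x).mulVec (g v)) = (Emat y).mulVec v))
    ↔
    ∃ (f : F ≃+* F) (α β : F) (l : F →+ F) (x : F), α ≠ 0 ∧ β ≠ 0 ∧
      ∀ v : Fin 3 → F,
        g v = ![f (α * ((Emat x).mulVec v 0 + l ((Emat x).mulVec v 2))),
                f (α * β * ((Emat x).mulVec v 1)),
                f (α * β ^ 2 * ((Emat x).mulVec v 2))] := by
  have h2 : (2 : F) ≠ 0 := Ring.two_ne_zero (by rwa [ringChar.eq F p])
  rw [exists_conjugatesEmat_iff, exists_conjugatesEmat_neg_iff]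
  constructor
  · rintro ⟨⟨y, hy⟩, y', hy'⟩
    exact hy.exists_normalForm h2 hy'
  · rintro ⟨f, α, β, l, x, -, hβ, hg⟩
    have hconj : ConjugatesEmat g fun a => f (a / β) := by
      rw [show ⇑g = normalForm f α β l x from funext hg]
      exact conjugatesEmat_normalForm f α hβ l x
    exact ⟨⟨_, hconj⟩, _, hconj.neg fun s => ⟨β * f.symm s, by simp [hβ]⟩⟩

/-- an `F_p`-linear automorphism `g` of `V = F_q³` (equivalently,
since `F_p` is the prime field, an automorphism of the additive group `V`)
normalizes `E = {E(x)}` if and only if `g ∈ F·K·L·E`, i.e. `g` is a composition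
(applied right to left) of some `E(x)`, an `L`-element `(u₁,u₂,u₃) ↦
(u₁ + ℓ(u₃), u₂, u₃)` with `ℓ` `F_p`-linear, a `K`-element
`diag(α, αβ, αβ²)` with `α, β ∈ F_q^*`, and a coordinatewise Galois
automorphism `f ∈ Gal(F_q/F_p)`. -/
theorem stmt_13 {F : Type*} [Field F] [Fintype F] (p : ℕ) [Fact p.Prime] [CharP F p]
    (hp : p ≠ 2) (g : AddAut (Fin 3 → F)) :
    ((∀ x : F, ∃ y : F, ∀ v : Fin 3 → F,
        g ((Emat x).mulVec ((-g) v)) = (Emat y).mulVec v) ∧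
     (∀ x : F, ∃ y : F, ∀ v : Fin 3 → F,
        (-g) ((Emat x).mulVec (g v)) = (Emat y).mulVec v))
    ↔
    ∃ (f : F ≃+* F) (α β : F) (l : F →+ F) (x : F), α ≠ 0 ∧ β ≠ 0 ∧
      ∀ v : Fin 3 → F,
        g v = ![f (α * ((Emat x).mulVec v 0 + l ((Emat x).mulVec v 2))),
                f (α * β * ((Emat x).mulVec v 1)),
                f (α * β ^ 2 * ((Emat x).mulVec v 2))] :=
  stmt_13_general p hp g
end

section
/- Let q = pⁿ, p an odd prime, V = F_q³ (additive group), V_+ ≤ Sym(V) the group of translations, and E ≤ GL₃(F_q) the group of matrices E(x) as above, so EV_+ is a p-group of order q⁴ acting on V. Every elementary abelian subgroup of EV_+ of order ≥ q²·p is contained in V_+. In particular, the Thompson subgroup E(EV_+) (generated by elementary abelian subgroups of maximal order) equals V_+. -/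
def EVset (F : Type*) [Field F] : Set (Equiv.Perm (Fin 3 → F)) :=
  {g | ∃ x : F, ∃ w : Fin 3 → F, ∀ v, g v = (Emat x).mulVec v + w}

def transSet (F : Type*) [Field F] : Set (Equiv.Perm (Fin 3 → F)) :=
  {g | ∃ w : Fin 3 → F, ∀ v, g v = v + w}

open Matrix

section

variable {F : Type*} [Field F]

lemma Emat_mulVec (x : F) (v : Fin 3 → F) :
    Emat x *ᵥ v = ![v 0 + x * v 1 + x ^ 2 / 2 * v 2, v 1 + x * v 2, v 2] := by
  ext i
  fin_cases i <;> simp [Emat, mulVec, dotProduct, Fin.sum_univ_three]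

lemma Emat_zero : Emat (0 : F) = 1 := by
  ext i j
  fin_cases i <;> fin_cases j <;> simp [Emat]

lemma Emat_mulVec_eq_self {x : F} (hx : x ≠ 0) {d : Fin 3 → F} (hd : Emat x *ᵥ d = d) :
    d 1 = 0 ∧ d 2 = 0 := by
  have h2 : d 2 = 0 := by simpa [Emat_mulVec, hx] using congrFun hd 1
  have h1 : d 1 = 0 := by simpa [Emat_mulVec, hx, h2] using congrFun hd 0
  exact ⟨h1, h2⟩

-- The parameter `x` of `g = E(x) · + w`, read off from `E(x) (0, 1, 0) = (x, 1, 0)`.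
def xCoord (g : Equiv.Perm (Fin 3 → F)) : F :=
  g ![0, 1, 0] 0 - g 0 0

namespace EVset

lemma apply_eq {g : Equiv.Perm (Fin 3 → F)} (hg : g ∈ EVset F) (v : Fin 3 → F) :
    g v = Emat (xCoord g) *ᵥ v + g 0 := by
  obtain ⟨x, w, hxw⟩ := hg
  simp [xCoord, hxw, Emat_mulVec]

lemma apply_apply_zero_of_commute {g t : Equiv.Perm (Fin 3 → F)} (hg : g ∈ EVset F)
    (ht : t ∈ EVset F) (h : g * t = t * g) :
    Emat (xCoord g) *ᵥ t 0 + g 0 = Emat (xCoord t) *ᵥ g 0 + t 0 := by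
  rw [← apply_eq hg, ← apply_eq ht]
  exact DFunLike.congr_fun h 0

lemma mem_transSet_of_xCoord_eq_zero {g : Equiv.Perm (Fin 3 → F)} (hg : g ∈ EVset F)
    (h : xCoord g = 0) : g ∈ transSet F :=
  ⟨g 0, fun v => by rw [apply_eq hg, h, Emat_zero, one_mulVec]⟩

lemma eq_of_commute {g t t' : Equiv.Perm (Fin 3 → F)} (hg : g ∈ EVset F) (hx : xCoord g ≠ 0)
    (ht : t ∈ EVset F) (ht' : t' ∈ EVset F) (hgt : g * t = t * g) (hgt' : g * t' = t' * g)
    (hxt : xCoord t = xCoord t') (h0 : t 0 0 = t' 0 0) : t = t' := by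
  have hfix : Emat (xCoord g) *ᵥ (t 0 - t' 0) = t 0 - t' 0 := by
    have e := apply_apply_zero_of_commute hg ht hgt
    have e' := apply_apply_zero_of_commute hg ht' hgt'
    rw [hxt] at e
    rw [mulVec_sub]
    linear_combination (norm := abel) e - e'
  obtain ⟨h1, h2⟩ := Emat_mulVec_eq_self hx hfix
  have hu : t 0 = t' 0 := by
    ext i
    fin_cases i
    exacts [h0, sub_eq_zero.1 h1, sub_eq_zero.1 h2]
  ext v
  rw [apply_eq ht, apply_eq ht', hxt, hu]

variable [Fintype F]

lemma card_le_sq_of_commute {g : Equiv.Perm (Fin 3 → F)} (hg : g ∈ EVset F) (hx : xCoord g ≠ 0)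
    {T : Set (Equiv.Perm (Fin 3 → F))} (hT : T ⊆ EVset F) (hcomm : ∀ t ∈ T, g * t = t * g) :
    Nat.card T ≤ Fintype.card F ^ 2 := by
  have hinj : Function.Injective fun t : T => (xCoord t.1, t.1 0 0) := by
    rintro ⟨t, ht⟩ ⟨t', ht'⟩ h
    obtain ⟨hxt, h0⟩ := Prod.mk.inj h
    exact Subtype.ext <|
      eq_of_commute hg hx (hT ht) (hT ht') (hcomm t ht) (hcomm t' ht') hxt h0
  simpa [sq] using Nat.card_le_card_of_injective _ hinj

lemma subset_transSet_of_sq_lt_card {T : Set (Equiv.Perm (Fin 3 → F))} (hT : T ⊆ EVset F)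
    (hcomm : ∀ a ∈ T, ∀ b ∈ T, a * b = b * a) (hcard : Fintype.card F ^ 2 < Nat.card T) :
    T ⊆ transSet F := by
  intro t ht
  refine mem_transSet_of_xCoord_eq_zero (hT ht) (by_contra fun hx => hcard.not_ge ?_)
  exact card_le_sq_of_commute (hT ht) hx hT (hcomm t ht)

end EVset

namespace transSet

lemma mem_iff {g : Equiv.Perm (Fin 3 → F)} : g ∈ transSet F ↔ ∃ w, g = Equiv.addRight w := by
  simp [transSet, Equiv.ext_iff]

lemma subset_EVset : transSet F ⊆ EVset F := fun _ ⟨w, hw⟩ =>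
  ⟨0, w, by simpa [Emat_zero] using hw⟩

variable (F) in
def subgroup : Subgroup (Equiv.Perm (Fin 3 → F)) where
  carrier := transSet F
  one_mem' := mem_iff.2 ⟨0, Equiv.addRight_zero.symm⟩
  mul_mem' := by
    intro a b ha hb
    obtain ⟨w, rfl⟩ := mem_iff.1 ha
    obtain ⟨u, rfl⟩ := mem_iff.1 hb
    exact mem_iff.2 ⟨u + w, (Equiv.addRight_add u w).symm⟩
  inv_mem' := by
    intro a ha
    obtain ⟨w, rfl⟩ := mem_iff.1 ha
    exact mem_iff.2 ⟨-w, Equiv.neg_addRight w⟩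

lemma commute {a b : Equiv.Perm (Fin 3 → F)} (ha : a ∈ transSet F) (hb : b ∈ transSet F) :
    a * b = b * a := by
  obtain ⟨w, rfl⟩ := mem_iff.1 ha
  obtain ⟨u, rfl⟩ := mem_iff.1 hb
  rw [← Equiv.addRight_add, ← Equiv.addRight_add, add_comm]

lemma pow_char_eq_one (p : ℕ) [CharP F p] {a : Equiv.Perm (Fin 3 → F)} (ha : a ∈ transSet F) :
    a ^ p = 1 := by
  obtain ⟨w, rfl⟩ := mem_iff.1 ha
  rw [Equiv.nsmul_addRight, ← Nat.cast_smul_eq_nsmul F, CharP.cast_eq_zero, zero_smul,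
    Equiv.addRight_zero]

variable [Fintype F]

lemma card_subgroup : Nat.card (subgroup F) = Fintype.card F ^ 3 := by
  have hrange : (subgroup F : Set (Equiv.Perm (Fin 3 → F))) = Set.range Equiv.addRight :=
    Set.ext fun _ => mem_iff.trans (exists_congr fun _ => eq_comm)
  have hinj : Function.Injective (Equiv.addRight : (Fin 3 → F) → Equiv.Perm (Fin 3 → F)) :=
    fun w u h => by simpa using DFunLike.congr_fun h 0
  rw [← SetLike.coe_sort_coe, hrange, Nat.card_range_of_injective hinj, Nat.card_eq_fintype_card,
    Fintype.card_fun, Fintype.card_fin]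

lemma card_le_card_subgroup {T : Subgroup (Equiv.Perm (Fin 3 → F))}
    (hT : (T : Set (Equiv.Perm (Fin 3 → F))) ⊆ EVset F)
    (hcomm : ∀ a ∈ T, ∀ b ∈ T, a * b = b * a) : Nat.card T ≤ Nat.card (subgroup F) := by
  rcases le_or_gt (Nat.card T) (Fintype.card F ^ 2) with hle | hlt
  · rw [card_subgroup]
    exact hle.trans (Nat.pow_le_pow_right Fintype.card_pos (by norm_num))
  · exact Subgroup.card_le_of_le (EVset.subset_transSet_of_sq_lt_card hT hcomm hlt)

end transSet

end

theorem stmt_14_general {F : Type*} [Field F] [Fintype F] (p : ℕ) [CharP F p] :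
    (∀ T : Subgroup (Equiv.Perm (Fin 3 → F)), (T : Set (Equiv.Perm (Fin 3 → F))) ⊆ EVset F →
      (∀ a ∈ T, ∀ b ∈ T, a * b = b * a) → (∀ a ∈ T, a ^ p = 1) →
      Fintype.card F ^ 2 * p ≤ Nat.card T →
      (T : Set (Equiv.Perm (Fin 3 → F))) ⊆ transSet F) ∧
    Subgroup.closure (⋃ T ∈ {T : Subgroup (Equiv.Perm (Fin 3 → F)) |
        (T : Set (Equiv.Perm (Fin 3 → F))) ⊆ EVset F ∧
        (∀ a ∈ T, ∀ b ∈ T, a * b = b * a) ∧ (∀ a ∈ T, a ^ p = 1) ∧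
        ∀ T' : Subgroup (Equiv.Perm (Fin 3 → F)),
          (T' : Set (Equiv.Perm (Fin 3 → F))) ⊆ EVset F →
          (∀ a ∈ T', ∀ b ∈ T', a * b = b * a) → (∀ a ∈ T', a ^ p = 1) →
          Nat.card T' ≤ Nat.card T}, (T : Set (Equiv.Perm (Fin 3 → F)))) =
      Subgroup.closure (transSet F) := by
  set q := Fintype.card F
  have hp2 : 2 ≤ p := (CharP.char_is_prime F p).two_le
  have hpq : q ^ 2 * p ≤ q ^ 3 := Nat.mul_le_mul_left _ <| Nat.le_of_dvd Fintype.card_pos <|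
    (CharP.cast_eq_zero_iff F p _).1 (FiniteField.cast_card_eq_zero F)
  have hlarge : ∀ T : Subgroup (Equiv.Perm (Fin 3 → F)),
      (T : Set (Equiv.Perm (Fin 3 → F))) ⊆ EVset F → (∀ a ∈ T, ∀ b ∈ T, a * b = b * a) →
      q ^ 2 * p ≤ Nat.card T → (T : Set (Equiv.Perm (Fin 3 → F))) ⊆ transSet F :=
    fun T hT hcomm hcard => EVset.subset_transSet_of_sq_lt_card hT hcomm <|
      (lt_mul_of_one_lt_right (by positivity) hp2).trans_le hcard
  have htrans_comm : ∀ a ∈ transSet.subgroup F, ∀ b ∈ transSet.subgroup F, a * b = b * a :=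
    fun _ ha _ hb => transSet.commute ha hb
  refine ⟨fun T hT hcomm _ hcard => hlarge T hT hcomm hcard, congrArg _ ?_⟩
  refine Set.Subset.antisymm (Set.iUnion₂_subset fun T ⟨hT, hcomm, _, hmax⟩ => ?_) fun g hg => ?_
  · refine hlarge T hT hcomm (hpq.trans ?_)
    rw [← transSet.card_subgroup]
    exact hmax _ transSet.subset_EVset htrans_comm fun _ => transSet.pow_char_eq_one p
  · exact Set.mem_biUnion (x := transSet.subgroup F) ⟨transSet.subset_EVset, htrans_comm,
      fun _ => transSet.pow_char_eq_one p,
      fun T' hT' hcomm _ => transSet.card_le_card_subgroup hT' hcomm⟩ hg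

/-- every elementary abelian subgroup of `EV₊` of order `≥ q²·p`
consists of translations; in particular the Thompson subgroup of `EV₊`
(generated by the elementary abelian subgroups of maximal order) is `V₊`. -/
theorem stmt_14 {F : Type*} [Field F] [Fintype F] (p : ℕ) [Fact p.Prime] [CharP F p]
    (hp : p ≠ 2) :
    (∀ T : Subgroup (Equiv.Perm (Fin 3 → F)), (T : Set (Equiv.Perm (Fin 3 → F))) ⊆ EVset F →
      (∀ a ∈ T, ∀ b ∈ T, a * b = b * a) → (∀ a ∈ T, a ^ p = 1) →
      Fintype.card F ^ 2 * p ≤ Nat.card T →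
      (T : Set (Equiv.Perm (Fin 3 → F))) ⊆ transSet F) ∧
    Subgroup.closure (⋃ T ∈ {T : Subgroup (Equiv.Perm (Fin 3 → F)) |
        (T : Set (Equiv.Perm (Fin 3 → F))) ⊆ EVset F ∧
        (∀ a ∈ T, ∀ b ∈ T, a * b = b * a) ∧ (∀ a ∈ T, a ^ p = 1) ∧
        ∀ T' : Subgroup (Equiv.Perm (Fin 3 → F)),
          (T' : Set (Equiv.Perm (Fin 3 → F))) ⊆ EVset F →
          (∀ a ∈ T', ∀ b ∈ T', a * b = b * a) → (∀ a ∈ T', a ^ p = 1) →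
          Nat.card T' ≤ Nat.card T}, (T : Set (Equiv.Perm (Fin 3 → F)))) =
      Subgroup.closure (transSet F) :=
  stmt_14_general p
end

section
/- Let p be an odd prime, q = pⁿ, E ≅ (F_q, +) and Q a cyclic p-group acting faithfully on E as a group of field automorphisms of F_q (a subgroup of the Sylow p-subgroup of Gal(F_q/F_p)). Then E is the unique elementary abelian p-subgroup of maximal order in the semidirect product QE; in particular the Thompson subgroup E(QE) equals E. -/
/-- The subgroup `QE ≤ Sym(F_q)`: all maps `y ↦ f(y) + a` with `f ∈ Q`, `a ∈ F_q`,
as a set of permutations. -/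
def QEset {F : Type*} [Field F] (Q : Subgroup (RingAut F)) : Set (Equiv.Perm F) :=
  {g | ∃ f ∈ Q, ∃ a : F, ∀ y : F, g y = f y + a}

/-- The translation subgroup `E = (F_q)₊ ≤ Sym(F_q)`. -/
def transGrp (F : Type*) [Field F] : Subgroup (Equiv.Perm F) :=
  Subgroup.closure (Set.range fun a : F => Equiv.addRight a)

/-!
An abelian subgroup `T` of `QE` maps to `Q` with image `H`, and its kernel consists of
translations. Since they commute with all of `T`, the kernel translations are by elements of the
fixed field `K = F^H`, so `|T| ≤ |H| |K|`, whereas `|F| = |K| ^ |H|` by Artin's theorem. If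
`H ≠ 1` then `|H| ≥ 2` and `|K| ≥ p ≥ 3`, which forces `|H| |K| < |K| ^ |H|`; if `H = 1` then
`T ≤ E`.
-/

open Equiv

section Translations

variable (A : Type*) [AddCommGroup A] in
def translationHom : Multiplicative A →* Perm A where
  toFun a := Equiv.addRight a.toAdd
  map_one' := by ext; simp
  map_mul' a b := by ext; simp only [toAdd_mul, coe_addRight, Perm.mul_apply]; abel

theorem translationHom_injective {A : Type*} [AddCommGroup A] :
    Function.Injective (translationHom A) := fun a b h => by
  simpa [translationHom] using congr($h 0)

variable {F : Type*} [Field F]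

theorem transGrp_eq_range : transGrp F = (translationHom F).range := by
  rw [transGrp, ← Subgroup.closure_eq (translationHom F).range, MonoidHom.coe_range]
  exact congrArg _ (Multiplicative.ofAdd.surjective.range_comp _).symm

theorem mem_transGrp_iff {g : Perm F} : g ∈ transGrp F ↔ ∃ a : F, Equiv.addRight a = g := by
  rw [transGrp_eq_range, MonoidHom.mem_range]
  exact Multiplicative.ofAdd.surjective.exists

theorem transGrp_subset_QEset (Q : Subgroup (RingAut F)) :
    (transGrp F : Set (Perm F)) ⊆ QEset Q := by
  intro g hg
  obtain ⟨a, rfl⟩ := mem_transGrp_iff.1 hg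
  exact ⟨1, Q.one_mem, a, fun _ => rfl⟩

theorem card_transGrp [Finite F] : Nat.card (transGrp F) = Nat.card F := by
  rw [transGrp_eq_range, ← SetLike.coe_sort_coe, MonoidHom.coe_range,
    Nat.card_range_of_injective translationHom_injective]
  rfl

theorem transGrp_mul_comm {g h : Perm F} (hg : g ∈ transGrp F) (hh : h ∈ transGrp F) :
    g * h = h * g := by
  rw [transGrp_eq_range] at hg hh
  obtain ⟨a, rfl⟩ := hg
  obtain ⟨b, rfl⟩ := hh
  rw [← map_mul, ← map_mul, mul_comm]

theorem pow_charP_eq_one_of_mem_transGrp (p : ℕ) [CharP F p] {g : Perm F} (hg : g ∈ transGrp F) :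
    g ^ p = 1 := by
  rw [transGrp_eq_range] at hg
  obtain ⟨a, rfl⟩ := hg
  rw [← map_pow, ← map_one (translationHom F)]
  congr 1
  exact Multiplicative.toAdd.injective (by simp)

end Translations

section Semilinear

variable {F : Type*} [Field F] {Q : Subgroup (RingAut F)} {T : Subgroup (Perm F)}

theorem exists_ringAut_apply_eq_add_of_mem_QEset {g : Perm F} (hg : g ∈ QEset Q) :
    ∃ f : RingAut F, ∀ y, g y = f y + g 0 := by
  obtain ⟨f, -, a, h⟩ := hg
  exact ⟨f, fun y => by rw [h y, h 0, map_zero, zero_add]⟩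

theorem ringAut_eq_of_apply_eq_add {g : Perm F} {f f' : RingAut F} (h : ∀ y, g y = f y + g 0)
    (h' : ∀ y, g y = f' y + g 0) : f = f' :=
  RingEquiv.ext fun y => add_right_cancel ((h y).symm.trans (h' y))

noncomputable def ringAutPart (hT : (T : Set (Perm F)) ⊆ QEset Q) : T →* RingAut F where
  toFun g := (exists_ringAut_apply_eq_add_of_mem_QEset (hT g.2)).choose
  map_one' := ringAut_eq_of_apply_eq_add
    (exists_ringAut_apply_eq_add_of_mem_QEset (hT T.one_mem)).choose_spec (by simp)
  map_mul' g h := by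
    refine ringAut_eq_of_apply_eq_add
      (exists_ringAut_apply_eq_add_of_mem_QEset (hT (g * h).2)).choose_spec fun y => ?_
    obtain hg := (exists_ringAut_apply_eq_add_of_mem_QEset (hT g.2)).choose_spec
    obtain hh := (exists_ringAut_apply_eq_add_of_mem_QEset (hT h.2)).choose_spec
    rw [Subgroup.coe_mul, Perm.mul_apply, Perm.mul_apply, hh, hg, hg (h.1 0), map_add, add_assoc]
    rfl

variable (hT : (T : Set (Perm F)) ⊆ QEset Q)

theorem apply_eq_ringAutPart_add (g : T) (y : F) :
    (g : Perm F) y = ringAutPart hT g y + (g : Perm F) 0 :=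
  (exists_ringAut_apply_eq_add_of_mem_QEset (hT g.2)).choose_spec y

theorem apply_eq_add_of_mem_ker {g : T} (hg : g ∈ (ringAutPart hT).ker) (y : F) :
    (g : Perm F) y = y + (g : Perm F) 0 := by
  rw [apply_eq_ringAutPart_add hT, hg]
  rfl

theorem ringAutPart_apply_zero_of_mem_ker (hcomm : ∀ a ∈ T, ∀ b ∈ T, a * b = b * a) (g : T)
    {h : T} (hh : h ∈ (ringAutPart hT).ker) :
    ringAutPart hT g ((h : Perm F) 0) = (h : Perm F) 0 := by
  refine add_right_cancel (b := (g : Perm F) 0) ?_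
  calc ringAutPart hT g ((h : Perm F) 0) + (g : Perm F) 0
      = (g : Perm F) ((h : Perm F) 0) := (apply_eq_ringAutPart_add hT g _).symm
    _ = (h : Perm F) ((g : Perm F) 0) := congr($(hcomm g g.2 h h.2) 0)
    _ = (h : Perm F) 0 + (g : Perm F) 0 := by rw [apply_eq_add_of_mem_ker hT hh, add_comm]

end Semilinear

section FixedField

variable {F : Type*} [Field F] [Finite F]

instance : Finite (RingAut F) := DFunLike.finite _

theorem card_eq_card_fixedPoints_pow (H : Subgroup (RingAut F)) :
    Nat.card F = Nat.card (FixedPoints.subfield H F) ^ Nat.card H := by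
  have := Fintype.ofFinite F
  have := Fintype.ofFinite H
  have := Fintype.ofFinite (FixedPoints.subfield H F)
  rw [Nat.card_eq_fintype_card, Nat.card_eq_fintype_card, Nat.card_eq_fintype_card,
    ← FixedPoints.finrank_eq_card H F]
  exact Module.card_eq_pow_finrank

theorem le_card_subfield (p : ℕ) [CharP F p] (K : Subfield F) : p ≤ Nat.card K := by
  have := Fintype.ofFinite K
  obtain ⟨n, -, hn⟩ := FiniteField.card K p
  rw [Nat.card_eq_fintype_card, hn]
  exact Nat.le_self_pow n.ne_zero p

end FixedField

theorem mul_lt_pow_of_three_le {m d : ℕ} (hm : 3 ≤ m) (hd : 2 ≤ d) : m * d < m ^ d := by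
  induction d, hd using Nat.le_induction with
  | base => nlinarith
  | succ d hd ih =>
    have : m ≤ m ^ d := Nat.le_self_pow (by omega) m
    rw [pow_succ]
    nlinarith

section Counting

variable {F : Type*} [Field F] {Q : Subgroup (RingAut F)} {T : Subgroup (Perm F)}
  (hT : (T : Set (Perm F)) ⊆ QEset Q)

theorem card_ker_ringAutPart_le [Finite F] (hcomm : ∀ a ∈ T, ∀ b ∈ T, a * b = b * a) :
    Nat.card (ringAutPart hT).ker ≤
      Nat.card (FixedPoints.subfield (ringAutPart hT).range F) := by
  refine Nat.card_le_card_of_injective (fun g => ⟨(g : Perm F) 0, ?_⟩) fun g₁ g₂ h => ?_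
  · rintro ⟨_, g', rfl⟩
    exact ringAutPart_apply_zero_of_mem_ker hT hcomm g' g.2
  · refine Subtype.ext (Subtype.ext (Equiv.ext fun y => ?_))
    rw [apply_eq_add_of_mem_ker hT g₁.2, apply_eq_add_of_mem_ker hT g₂.2]
    exact congr(y + $(congrArg Subtype.val h))

theorem card_le_card_range_mul_card_fixedPoints [Finite F]
    (hcomm : ∀ a ∈ T, ∀ b ∈ T, a * b = b * a) :
    Nat.card T ≤ Nat.card (ringAutPart hT).range *
      Nat.card (FixedPoints.subfield (ringAutPart hT).range F) := by
  rw [← (ringAutPart hT).ker.card_mul_index, Subgroup.index_ker, mul_comm]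
  exact Nat.mul_le_mul_left _ (card_ker_ringAutPart_le hT hcomm)

theorem le_transGrp_of_ringAutPart_eq_one (h : ringAutPart hT = 1) : T ≤ transGrp F :=
  fun g hg => mem_transGrp_iff.2
    ⟨g 0, Equiv.ext fun y => (apply_eq_add_of_mem_ker hT (g := ⟨g, hg⟩) (by simp [h]) y).symm⟩

theorem card_lt_of_ringAutPart_ne_one [Finite F] (p : ℕ) [CharP F p] (hp : p ≠ 2)
    (hcomm : ∀ a ∈ T, ∀ b ∈ T, a * b = b * a) (h : ringAutPart hT ≠ 1) :
    Nat.card T < Nat.card F := by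
  set H := (ringAutPart hT).range
  have hH : 2 ≤ Nat.card H :=
    (Subgroup.one_lt_card_iff_ne_bot H).2 (MonoidHom.range_eq_bot_iff.not.2 h)
  have hK : 3 ≤ Nat.card (FixedPoints.subfield H F) :=
    ((CharP.char_is_prime F p).two_le.lt_of_ne' hp).trans_le (le_card_subfield p _)
  calc Nat.card T ≤ Nat.card H * Nat.card (FixedPoints.subfield H F) :=
        card_le_card_range_mul_card_fixedPoints hT hcomm
    _ < Nat.card (FixedPoints.subfield H F) ^ Nat.card H := by
        rw [mul_comm]
        exact mul_lt_pow_of_three_le hK hH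
    _ = Nat.card F := (card_eq_card_fixedPoints_pow H).symm

end Counting

theorem stmt_16_general {F : Type*} [Field F] [Fintype F] (p : ℕ) [CharP F p]
    (hp : p ≠ 2)
    (Q : Subgroup (RingAut F)) :
    (transGrp F : Set (Equiv.Perm F)) ⊆ QEset Q ∧
    (∀ a ∈ transGrp F, ∀ b ∈ transGrp F, a * b = b * a) ∧
    (∀ a ∈ transGrp F, a ^ p = 1) ∧
    Nat.card (transGrp F) = Fintype.card F ∧
    ∀ T : Subgroup (Equiv.Perm F), (T : Set (Equiv.Perm F)) ⊆ QEset Q →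
      (∀ a ∈ T, ∀ b ∈ T, a * b = b * a) → (∀ a ∈ T, a ^ p = 1) →
      Nat.card T ≤ Fintype.card F ∧
        (Nat.card T = Fintype.card F → T = transGrp F) := by
  rw [← Nat.card_eq_fintype_card]
  refine ⟨transGrp_subset_QEset Q, fun _ ha _ hb => transGrp_mul_comm ha hb,
    fun _ ha => pow_charP_eq_one_of_mem_transGrp p ha, card_transGrp, fun T hT hcomm _ => ?_⟩
  by_cases h : ringAutPart hT = 1
  · have hle := le_transGrp_of_ringAutPart_eq_one hT h
    exact ⟨(Subgroup.card_le_of_le hle).trans card_transGrp.le,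
      fun hcard => Subgroup.eq_of_le_of_card_ge hle (card_transGrp.trans hcard.symm).le⟩
  · have hlt := card_lt_of_ringAutPart_ne_one hT p hp hcomm h
    exact ⟨hlt.le, fun hcard => absurd hcard hlt.ne⟩

/-- for `Q` a `p`-group of field automorphisms of `F_q` (a subgroup
of the Sylow `p`-subgroup of `Gal(F_q/F_p)`), the translation group
`E ≅ (F_q, +)` is the unique elementary abelian subgroup of maximal order `q`
of `QE = E ⋊ Q`; in particular the Thompson subgroup of `QE` is `E`. -/
theorem stmt_16 {F : Type*} [Field F] [Fintype F] (p n : ℕ) [Fact p.Prime] [CharP F p]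
    (hp : p ≠ 2) (hcard : Fintype.card F = p ^ n)
    (Q : Subgroup (RingAut F)) (hQ : IsPGroup p Q) :
    (transGrp F : Set (Equiv.Perm F)) ⊆ QEset Q ∧
    (∀ a ∈ transGrp F, ∀ b ∈ transGrp F, a * b = b * a) ∧
    (∀ a ∈ transGrp F, a ^ p = 1) ∧
    Nat.card (transGrp F) = Fintype.card F ∧
    ∀ T : Subgroup (Equiv.Perm F), (T : Set (Equiv.Perm F)) ⊆ QEset Q →
      (∀ a ∈ T, ∀ b ∈ T, a * b = b * a) → (∀ a ∈ T, a ^ p = 1) →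
      Nat.card T ≤ Fintype.card F ∧
        (Nat.card T = Fintype.card F → T = transGrp F) :=
  stmt_16_general p hp Q
end

section
/- Let q = pⁿ, J ⊆ F_q with |J| coprime to p, and Q the set of pairs (α, f) with α ∈ F_q and f in the Sylow p-subgroup of Gal(F_q/F_p) such that f(J) + α = J. Then Q is a subgroup of F_q ⋊ Gal(F_q/F_p) under (α,f)·(β,g) = (α + f(β), f∘g), the projection (α,f) ↦ f is injective on Q (so Q is a cyclic p-group), and Q ∩ (F_q × {id}) is trivial. -/
/-!
Affine maps `j ↦ f j + α` compose according to the semidirect product law, so `Q` is closed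
under products and inverses; the Sylow condition survives products because automorphisms of a
finite field commute (they form the cyclic group `Gal(F/𝔽_p)`). If `(α, f), (β, f) ∈ Q`, then
`(α - β, id) ∈ Q`, i.e. `J + (α - β) = J`. A nonzero translation permutes `J` with order `p` and
without fixed points, so all its orbits have size `p` and `p ∣ |J|`; hence `α = β`.
-/

/-- The set `Q` of pairs `(α, f)`, with `f` of `p`-power order in `Gal(F_q/F_p)`
(i.e. in its Sylow `p`-subgroup) and `α ∈ F_q`, such that `f(J) + α = J`. -/
def stabQ {F : Type*} [Field F] [DecidableEq F] (p : ℕ) (J : Finset F) :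
    Set (F × RingAut F) :=
  {af | (∃ k : ℕ, af.2 ^ p ^ k = 1) ∧ (J.image fun j => af.2 j + af.1) = J}

theorem Finset.prime_dvd_card_of_image_add_right_eq {G : Type*} [AddGroup G] [DecidableEq G]
    {p : ℕ} [Fact p.Prime] {J : Finset G} {α : G} (hα : α ≠ 0) (hpα : p • α = 0)
    (hJ : J.image (· + α) = J) : p ∣ J.card := by
  have hmem : ∀ x, Equiv.addRight α x ∈ J ↔ x ∈ J := fun x => by
    conv_lhs => rw [← hJ]
    simp
  set σ : Equiv.Perm J := (Equiv.addRight α).subtypePerm hmem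
  have hσ : σ ^ p ^ 1 = 1 := by
    ext x
    simp [σ, Equiv.Perm.subtypePerm_pow, hpα]
  have hsupp : σ.support = univ := by
    ext x
    simp [σ, hα]
  have hmod := Equiv.Perm.card_compl_support_modEq hσ
  rw [hsupp, compl_univ, card_empty, Fintype.card_coe] at hmod
  exact Nat.modEq_zero_iff_dvd.mp hmod.symm

-- Every ring automorphism is `ZMod p`-linear, so it lies in the cyclic group `Gal(F/ZMod p)`.
theorem RingAut.commute_of_finite {F : Type*} [Field F] [Finite F] (f g : RingAut F) :
    Commute f g := by
  obtain ⟨p, _⟩ := CharP.exists F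
  have : Fact p.Prime := ⟨CharP.char_is_prime F p⟩
  let _ := ZMod.algebra F p
  let toGal (f : RingAut F) : Gal(F/ZMod p) :=
    AlgEquiv.ofRingEquiv (f := f) fun x =>
      RingHom.congr_fun (RingHom.ext_zmod ((f : F →+* F).comp (algebraMap (ZMod p) F)) _) x
  let _ := IsCyclic.commGroup (α := Gal(F/ZMod p))
  exact RingEquiv.ext fun x => DFunLike.congr_fun (mul_comm (toGal f) (toGal g)) x

theorem Commute.exists_mul_pow_prime_pow_eq_one {M : Type*} [Monoid M] {a b : M}
    (hab : Commute a b) {p : ℕ} (ha : ∃ k, a ^ p ^ k = 1) (hb : ∃ l, b ^ p ^ l = 1) :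
    ∃ m, (a * b) ^ p ^ m = 1 := by
  obtain ⟨k, hk⟩ := ha
  obtain ⟨l, hl⟩ := hb
  refine ⟨k + l, ?_⟩
  rw [hab.mul_pow, pow_add, pow_mul, hk, mul_comm, pow_mul, hl, one_pow, one_pow, one_mul]

section stabQ

variable {F : Type*} [Field F] [DecidableEq F] {p : ℕ} {J : Finset F}

theorem one_mem_stabQ : ((0, 1) : F × RingAut F) ∈ stabQ p J :=
  ⟨⟨0, one_pow _⟩, by simp⟩

theorem mul_mem_stabQ [Finite F] {a b : F × RingAut F} (ha : a ∈ stabQ p J)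
    (hb : b ∈ stabQ p J) : ((a.1 + a.2 b.1, a.2 * b.2) : F × RingAut F) ∈ stabQ p J := by
  obtain ⟨ha_pow, ha_img⟩ := ha
  obtain ⟨hb_pow, hb_img⟩ := hb
  refine ⟨(RingAut.commute_of_finite a.2 b.2).exists_mul_pow_prime_pow_eq_one ha_pow hb_pow, ?_⟩
  calc J.image (fun j => (a.2 * b.2) j + (a.1 + a.2 b.1))
      = (J.image fun j => b.2 j + b.1).image fun j => a.2 j + a.1 := by
        rw [Finset.image_image]
        congr 1
        funext j
        simp only [Function.comp_apply, RingAut.mul_apply, map_add]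
        ring
    _ = J := by rw [hb_img, ha_img]

theorem inv_mem_stabQ {a : F × RingAut F} (ha : a ∈ stabQ p J) :
    ((-(a.2⁻¹ a.1), a.2⁻¹) : F × RingAut F) ∈ stabQ p J := by
  obtain ⟨⟨k, hk⟩, ha_img⟩ := ha
  refine ⟨⟨k, by rw [inv_pow, hk, inv_one]⟩, ?_⟩
  calc J.image (fun j => a.2⁻¹ j + -(a.2⁻¹ a.1))
      = (J.image fun j => a.2 j + a.1).image fun j => a.2⁻¹ j + -(a.2⁻¹ a.1) := by rw [ha_img]
    _ = J := by
        rw [Finset.image_image]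
        convert Finset.image_id (s := J)
        funext j
        simp [RingAut.inv_apply]

theorem eq_zero_of_mk_one_mem_stabQ [Fact p.Prime] [CharP F p] (hJ : ¬ p ∣ J.card) {α : F}
    (hα : ((α, 1) : F × RingAut F) ∈ stabQ p J) : α = 0 := by
  by_contra hα0
  exact hJ (J.prime_dvd_card_of_image_add_right_eq hα0 (by simp) hα.2)

theorem fst_eq_of_mem_stabQ [Finite F] [Fact p.Prime] [CharP F p] (hJ : ¬ p ∣ J.card)
    {a b : F × RingAut F} (ha : a ∈ stabQ p J) (hb : b ∈ stabQ p J) (h : a.2 = b.2) :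
    a.1 = b.1 := by
  have hquot := mul_mem_stabQ ha (inv_mem_stabQ hb)
  rw [h, mul_inv_cancel, map_neg, RingAut.inv_apply, RingEquiv.apply_symm_apply,
    ← sub_eq_add_neg] at hquot
  exact sub_eq_zero.mp (eq_zero_of_mk_one_mem_stabQ hJ hquot)

end stabQ

/-- if `|J|` is coprime to `p`, then `Q = {(α,f) : f(J) + α = J}` is
a subgroup of `F_q ⋊ Gal(F_q/F_p)` under `(α,f)·(β,g) = (α + f(β), f∘g)` (it
contains the identity and is closed under multiplication and inversion), the
projection `(α,f) ↦ f` is injective on `Q` (so `Q` is a cyclic `p`-group), and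
`Q ∩ (F_q × {id})` is trivial. -/
theorem stmt_17 {F : Type*} [Field F] [Fintype F] [DecidableEq F]
    (p : ℕ) [Fact p.Prime] [CharP F p] (J : Finset F) (hJ : ¬ p ∣ J.card) :
    ((0, 1) : F × RingAut F) ∈ stabQ p J ∧
    (∀ a ∈ stabQ p J, ∀ b ∈ stabQ p J,
      ((a.1 + a.2 b.1, a.2 * b.2) : F × RingAut F) ∈ stabQ p J) ∧
    (∀ a ∈ stabQ p J, ((-(a.2⁻¹ a.1), a.2⁻¹) : F × RingAut F) ∈ stabQ p J) ∧
    (∀ a ∈ stabQ p J, ∀ b ∈ stabQ p J, a.2 = b.2 → a.1 = b.1) ∧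
    (∀ α : F, ((α, 1) : F × RingAut F) ∈ stabQ p J → α = 0) :=
  ⟨one_mem_stabQ, fun _ ha _ hb => mul_mem_stabQ ha hb, fun _ => inv_mem_stabQ,
    fun _ ha _ hb => fst_eq_of_mem_stabQ hJ ha hb, fun _ => eq_zero_of_mk_one_mem_stabQ hJ⟩
end
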